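/- arXiv:1703.03239 — 4 statements merged into one kernel-verified Lean document; each statement's English description precedes it below -/
import Mathlib

section
/- For every parity game G whose priorities lie in {q,...,0} with q even and every natural number n: if Even has a winning strategy in G, then Even has a winning strategy in the n-challenge game on G. -/
namespace MuCalc

/-- Formulas of the modal mu-calculus in guarded positive form. Propositional
variables and fixpoint variables are represented by natural numbers. -/
inductive Formula (Act : Type) : Type where
  | tt : Formula Act
  | ff : Formula Act
  | prop (P : ℕ) : Formula Act
  | nprop (P : ℕ) : Formula Act
  | var (X : ℕ) : Formula Act
  | and (φ ψ : Formula Act) : Formula Act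
  | or (φ ψ : Formula Act) : Formula Act
  | dia (a : Act) (φ : Formula Act) : Formula Act
  | box (a : Act) (φ : Formula Act) : Formula Act
  | mu (X : ℕ) (φ : Formula Act) : Formula Act
  | nu (X : ℕ) (φ : Formula Act) : Formula Act
  deriving DecidableEq

/-- A labelled transition system with a distinguished initial state. -/
structure LTS (Act : Type) where
  State : Type
  init : State
  trans : State → Act → State → Prop
  val : State → ℕ → Prop

/-- Knaster–Tarski semantics of the modal mu-calculus. -/
def sem {Act : Type} (M : LTS Act) : Formula Act → (ℕ → Set M.State) → Set M.State
  | .tt, _ => Set.univ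
  | .ff, _ => ∅
  | .prop P, _ => {s | M.val s P}
  | .nprop P, _ => {s | ¬ M.val s P}
  | .var X, ρ => ρ X
  | .and φ ψ, ρ => sem M φ ρ ∩ sem M ψ ρ
  | .or φ ψ, ρ => sem M φ ρ ∪ sem M ψ ρ
  | .dia a φ, ρ => {s | ∃ t, M.trans s a t ∧ t ∈ sem M φ ρ}
  | .box a φ, ρ => {s | ∀ t, M.trans s a t → t ∈ sem M φ ρ}
  | .mu X φ, ρ => ⋂₀ {T | sem M φ (Function.update ρ X T) ⊆ T}
  | .nu X φ, ρ => ⋃₀ {T | T ⊆ sem M φ (Function.update ρ X T)}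

/-- `M ⊨ φ`: the formula holds at the initial state. -/
def Sat {Act : Type} (M : LTS Act) (φ : Formula Act) : Prop :=
  M.init ∈ sem M φ (fun _ => ∅)

/-- Two formulas are equivalent if they hold in exactly the same structures. -/
def FEquiv {Act : Type} (φ ψ : Formula Act) : Prop :=
  ∀ M : LTS Act, Sat M φ ↔ Sat M ψ

/-- Free (fixpoint) variables of a formula. -/
def freeVars {Act : Type} : Formula Act → Set ℕ
  | .var X => {X}
  | .and φ ψ | .or φ ψ => freeVars φ ∪ freeVars ψ
  | .dia _ φ | .box _ φ => freeVars φ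
  | .mu X φ | .nu X φ => freeVars φ \ {X}
  | _ => ∅

/-- Fixpoint variables bound in a formula. -/
def fixVars {Act : Type} : Formula Act → Set ℕ
  | .and φ ψ | .or φ ψ => fixVars φ ∪ fixVars ψ
  | .dia _ φ | .box _ φ => fixVars φ
  | .mu X φ | .nu X φ => insert X (fixVars φ)
  | _ => ∅

/-- `PA Ω φ`: `Ω` is a valid priority assignment for `φ`: μ-bound variables get odd
priorities, ν-bound variables get even priorities, and any variable free in the
binding formula of `X` gets a priority at least `Ω X`. -/
def PA {Act : Type} (Ω : ℕ → ℕ) : Formula Act → Prop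
  | .and φ ψ | .or φ ψ => PA Ω φ ∧ PA Ω ψ
  | .dia _ φ | .box _ φ => PA Ω φ
  | .mu X φ => Odd (Ω X) ∧ (∀ Y ∈ freeVars φ, Ω X ≤ Ω Y) ∧ PA Ω φ
  | .nu X φ => Even (Ω X) ∧ (∀ Y ∈ freeVars φ, Ω X ≤ Ω Y) ∧ PA Ω φ
  | _ => True

/-- `φ` has a priority assignment with co-domain contained in `I`. -/
def HasIndexIn {Act : Type} (Ψ : Formula Act) (I : Set ℕ) : Prop :=
  ∃ Ω : ℕ → ℕ, PA Ω Ψ ∧ ∀ X ∈ fixVars Ψ, Ω X ∈ I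

/-- The class `Σμ2`: formulas of index `{1,0}`. -/
def IsSigma2 {Act : Type} (Ψ : Formula Act) : Prop := HasIndexIn Ψ {0, 1}

/-- The class `Πμ2`: formulas of index `{2,1}`. -/
def IsPi2 {Act : Type} (Ψ : Formula Act) : Prop := HasIndexIn Ψ {1, 2}

/-- `Ψ` is semantically in `Σμ2`: it is equivalent to some formula of index `{1,0}`. -/
def SemSigma2 {Act : Type} (Ψ : Formula Act) : Prop :=
  ∃ Φ : Formula Act, IsSigma2 Φ ∧ FEquiv Ψ Φ

/-- `Ψ` is semantically in `Πμ2`. -/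
def SemPi2 {Act : Type} (Ψ : Formula Act) : Prop :=
  ∃ Φ : Formula Act, IsPi2 Φ ∧ FEquiv Ψ Φ

/-- Syntactic subformula relation. -/
inductive Subf {Act : Type} : Formula Act → Formula Act → Prop
  | refl (φ : Formula Act) : Subf φ φ
  | andl {χ φ ψ : Formula Act} : Subf χ φ → Subf χ (.and φ ψ)
  | andr {χ φ ψ : Formula Act} : Subf χ ψ → Subf χ (.and φ ψ)
  | orl {χ φ ψ : Formula Act} : Subf χ φ → Subf χ (.or φ ψ)
  | orr {χ φ ψ : Formula Act} : Subf χ ψ → Subf χ (.or φ ψ)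
  | dia {χ φ : Formula Act} {a : Act} : Subf χ φ → Subf χ (.dia a φ)
  | box {χ φ : Formula Act} {a : Act} : Subf χ φ → Subf χ (.box a φ)
  | mu {χ φ : Formula Act} {X : ℕ} : Subf χ φ → Subf χ (.mu X φ)
  | nu {χ φ : Formula Act} {X : ℕ} : Subf χ φ → Subf χ (.nu X φ)

/-- `χ` is the binding formula of the fixpoint variable `X` in `Ψ`. -/
def BindsIn {Act : Type} (Ψ : Formula Act) (X : ℕ) (χ : Formula Act) : Prop :=
  Subf (.mu X χ) Ψ ∨ Subf (.nu X χ) Ψ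

/-- The number of subformulas (size) of a formula. -/
def size {Act : Type} : Formula Act → ℕ
  | .and φ ψ | .or φ ψ => size φ + size ψ + 1
  | .dia _ φ | .box _ φ | .mu _ φ | .nu _ φ => size φ + 1
  | _ => 1

/-- Every occurrence of `X` is in the scope of a modality. -/
def GuardedIn {Act : Type} (X : ℕ) : Formula Act → Prop
  | .var Y => Y ≠ X
  | .and φ ψ | .or φ ψ => GuardedIn X φ ∧ GuardedIn X ψ
  | .mu Y φ | .nu Y φ => Y = X ∨ GuardedIn X φ
  | _ => True

/-- A formula is guarded if every fixpoint variable is in the scope of a modality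
within its binding. -/
def Guarded {Act : Type} : Formula Act → Prop
  | .and φ ψ | .or φ ψ => Guarded φ ∧ Guarded ψ
  | .dia _ φ | .box _ φ => Guarded φ
  | .mu X φ | .nu X φ => GuardedIn X φ ∧ Guarded φ
  | _ => True

/-- Literals. -/
inductive IsLit {Act : Type} : Formula Act → Prop
  | prop (P : ℕ) : IsLit (.prop P)
  | nprop (P : ℕ) : IsLit (.nprop P)

/-- Finite conjunctions of literals. -/
inductive IsConjLit {Act : Type} : Formula Act → Prop
  | tt : IsConjLit .tt
  | lit {φ : Formula Act} : IsLit φ → IsConjLit φ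
  | and {φ ψ : Formula Act} : IsConjLit φ → IsConjLit ψ → IsConjLit (.and φ ψ)

/-- Disjunction of a finite list of formulas. -/
def orAll {Act : Type} : List (Formula Act) → Formula Act
  | [] => .ff
  | ψ :: l => .or ψ (orAll l)

/-- Conjunction of a finite list of formulas. -/
def andAll {Act : Type} : List (Formula Act) → Formula Act
  | [] => .tt
  | ψ :: l => .and ψ (andAll l)

/-- `→a B`: every formula of `B` holds at some `a`-successor and at every
`a`-successor some formula of `B` holds. -/
def arrowF {Act : Type} (a : Act) (B : List (Formula Act)) : Formula Act :=
  .and (andAll (B.map (.dia a))) (.box a (orAll B))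

/-- The Odd-choice formula `A ∧ ⋀_{a ∈ l} →a (B a)`. -/
def oddChoiceF {Act : Type} (A : Formula Act) (l : List Act)
    (B : Act → List (Formula Act)) : Formula Act :=
  .and A (andAll (l.map fun a => arrowF a (B a)))

/-- Formulas in disjunctive form. -/
inductive IsDisj {Act : Type} : Formula Act → Prop
  | tt : IsDisj .tt
  | ff : IsDisj .ff
  | var (X : ℕ) : IsDisj (.var X)
  | conj {φ : Formula Act} : IsConjLit φ → IsDisj φ
  | or {φ ψ : Formula Act} : IsDisj φ → IsDisj ψ → IsDisj (.or φ ψ)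
  | oddChoice {A : Formula Act} {l : List Act} {B : Act → List (Formula Act)} :
      IsConjLit A → (∀ a : Act, a ∈ l) → l.Nodup →
      (∀ a ψ, ψ ∈ B a → IsDisj ψ) → IsDisj (oddChoiceF A l B)
  | mu {X : ℕ} {φ : Formula Act} : IsDisj φ → IsDisj (.mu X φ)
  | nu {X : ℕ} {φ : Formula Act} : IsDisj φ → IsDisj (.nu X φ)

/-- An explicit injective encoding of formulas (over `Act = Fin k`) as natural
numbers, used to express computability. -/
def encodeFormula {k : ℕ} : Formula (Fin k) → ℕ
  | .tt => Nat.pair 0 0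
  | .ff => Nat.pair 1 0
  | .prop P => Nat.pair 2 P
  | .nprop P => Nat.pair 3 P
  | .var X => Nat.pair 4 X
  | .and φ ψ => Nat.pair 5 (Nat.pair (encodeFormula φ) (encodeFormula ψ))
  | .or φ ψ => Nat.pair 6 (Nat.pair (encodeFormula φ) (encodeFormula ψ))
  | .dia a φ => Nat.pair 7 (Nat.pair a.val (encodeFormula φ))
  | .box a φ => Nat.pair 8 (Nat.pair a.val (encodeFormula φ))
  | .mu X φ => Nat.pair 9 (Nat.pair X (encodeFormula φ))
  | .nu X φ => Nat.pair 10 (Nat.pair X (encodeFormula φ))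



/-- A two-player game arena with a parity-style priority labelling and an
explicit winner for dead-end positions. -/
structure Game where
  Pos : Type
  init : Pos
  evenOwns : Pos → Prop
  edge : Pos → Pos → Prop
  prio : Pos → ℕ
  finalWinEven : Pos → Prop

/-- A (history-dependent) strategy: given the history and the current position,
produce the next position. -/
abbrev Strategy (G : Game) : Type := List G.Pos → G.Pos → G.Pos

/-- A strategy is legal for the player owning the positions in `owns` if it always
moves along an edge whenever a move is available. -/
def LegalStrat (G : Game) (owns : G.Pos → Prop) (σ : Strategy G) : Prop :=
  ∀ (h : List G.Pos) (v : G.Pos), owns v → (∃ w, G.edge v w) → G.edge v (σ h v)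

/-- A finite play prefix (of length `k`) consistent with the strategy `σ`
of the player owning the positions in `owns`. -/
def PConsistent (G : Game) (owns : G.Pos → Prop) (σ : Strategy G) (k : ℕ)
    (p : ℕ → G.Pos) : Prop :=
  p 0 = G.init ∧ (∀ i, i < k → G.edge (p i) (p (i + 1))) ∧
    (∀ i, i < k → owns (p i) → p (i + 1) = σ ((List.range i).map p) (p i))

/-- An infinite play consistent with the strategy `σ`. -/
def InfConsistent (G : Game) (owns : G.Pos → Prop) (σ : Strategy G)
    (p : ℕ → G.Pos) : Prop :=
  p 0 = G.init ∧ (∀ i, G.edge (p i) (p (i + 1))) ∧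
    (∀ i, owns (p i) → p (i + 1) = σ ((List.range i).map p) (p i))

/-- A maximal finite play consistent with `σ`: it ends in a dead end. -/
def FinMaxConsistent (G : Game) (owns : G.Pos → Prop) (σ : Strategy G) (k : ℕ)
    (p : ℕ → G.Pos) : Prop :=
  PConsistent G owns σ k p ∧ ∀ w, ¬ G.edge (p k) w

/-- `d` is the dominant (greatest infinitely often occurring) value of `pr`. -/
def Dominant (pr : ℕ → ℕ) (d : ℕ) : Prop :=
  {i | pr i = d}.Infinite ∧ ∀ d', {i | pr i = d'}.Infinite → d' ≤ d

/-- The parity winning condition for Even on infinite plays. -/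
def ParityWinInf (G : Game) (p : ℕ → G.Pos) : Prop :=
  ∃ d, Dominant (fun i => G.prio (p i)) d ∧ Even d

/-- `σ` is a winning strategy for the player owning the positions in `owns`,
with dead-end winning condition `finalWin` and infinite-play winning
condition `W`. -/
def WinningStrat (G : Game) (owns finalWin : G.Pos → Prop)
    (W : (ℕ → G.Pos) → Prop) (σ : Strategy G) : Prop :=
  LegalStrat G owns σ ∧ (∀ p, InfConsistent G owns σ p → W p) ∧
    (∀ k p, FinMaxConsistent G owns σ k p → finalWin (p k))

/-- Even wins the parity game `G`. -/
def EvenWinsParity (G : Game) : Prop :=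
  ∃ σ, WinningStrat G G.evenOwns G.finalWinEven (ParityWinInf G) σ

/-- Odd wins the parity game `G`. -/
def OddWinsParity (G : Game) : Prop :=
  ∃ σ, WinningStrat G (fun v => ¬ G.evenOwns v) (fun v => ¬ G.finalWinEven v)
    (fun p => ¬ ParityWinInf G p) σ

/-- Position `x` is reached by some play prefix consistent with `σ`. -/
def ReachesPos (G : Game) (owns : G.Pos → Prop) (σ : Strategy G) (x : G.Pos) : Prop :=
  ∃ k p, PConsistent G owns σ k p ∧ p k = x

/-- Edges of the model-checking game `M × Ψ`. -/
def mcEdge {Act : Type} (M : LTS Act) (Ψ : Formula Act) :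
    (M.State × Formula Act) → (M.State × Formula Act) → Prop := fun x y =>
  match x.2 with
  | .and φ ψ => y.1 = x.1 ∧ (y.2 = φ ∨ y.2 = ψ)
  | .or φ ψ => y.1 = x.1 ∧ (y.2 = φ ∨ y.2 = ψ)
  | .dia a φ => y.2 = φ ∧ M.trans x.1 a y.1
  | .box a φ => y.2 = φ ∧ M.trans x.1 a y.1
  | .mu _ φ => y.1 = x.1 ∧ y.2 = φ
  | .nu _ φ => y.1 = x.1 ∧ y.2 = φ
  | .var X => y.1 = x.1 ∧ BindsIn Ψ X y.2
  | _ => False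

/-- The model-checking parity game `M × Ψ`, for a priority assignment `Ω` on `Ψ`;
`d0` is the minimal priority in the co-domain of `Ω`, assigned to non-variable
positions. -/
def mcGame {Act : Type} (M : LTS Act) (Ψ : Formula Act) (Ω : ℕ → ℕ) (d0 : ℕ) : Game where
  Pos := M.State × Formula Act
  init := (M.init, Ψ)
  evenOwns := fun x => match x.2 with
    | .and _ _ => False
    | .box _ _ => False
    | _ => True
  edge := mcEdge M Ψ
  prio := fun x => match x.2 with
    | .var X => Ω X
    | _ => d0
  finalWinEven := fun x => match x.2 with
    | .tt => True
    | .prop P => M.val x.1 P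
    | .nprop P => ¬ M.val x.1 P
    | .box _ _ => True
    | _ => False

/-- A configuration of the `n`-challenge game on a parity game with positions `P`:
the current position, the least open challenged (even) priority (`q+2` when all
challenges are met), the counter values, and the sub-round (`true` = Odd's turn
to open challenges). -/
structure CCfg (P : Type) where
  pos : P
  ptr : ℕ
  ctr : ℕ → ℕ
  rnd : Bool

/-- Updating the challenge configuration after a parity-game move to `v'`:
challenges of priority at most the seen priority are met, lower counters are
reset, and the game ends with an Even win (`none`) if a position of even
priority with exhausted counter is reached. -/
def chalUpdate (G : Game) (n : ℕ) (c : CCfg G.Pos) (v' : G.Pos) : Option (CCfg G.Pos) :=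
  let i := G.prio v'
  if Even i ∧ c.ctr i = 0 then none
  else some ⟨v', if c.ptr ≤ i then (if Even i then i + 2 else i + 1) else c.ptr,
    fun j => if c.ptr ≤ i ∧ j < i then n else c.ctr j, true⟩

/-- Odd's challenge-opening move: open all challenges of even priorities from
`c'.ptr` up to (excluding) `c.ptr`, in decreasing order, decrementing their
counters; all of these counters must be nonzero. -/
def chalOpenMove {P : Type} (c c' : CCfg P) : Prop :=
  c.rnd = true ∧ c'.rnd = false ∧ c'.pos = c.pos ∧
    Even c'.ptr ∧ c'.ptr ≤ c.ptr ∧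
    (∀ i, Even i → c'.ptr ≤ i → i < c.ptr → c.ctr i ≠ 0) ∧
    (∀ i, c'.ctr i = if Even i ∧ c'.ptr ≤ i ∧ i < c.ptr then c.ctr i - 1 else c.ctr i)

/-- The arena of the `n`-challenge game on the parity game `G` with priorities in
`{q,...,0}`, `q` even. The position `none` is the sink at which Even has won. -/
def chalGraph (G : Game) (q n : ℕ) : Game where
  Pos := Option (CCfg G.Pos)
  init := some ⟨G.init, q + 2, fun _ => n, true⟩
  evenOwns := fun x => match x with
    | none => True
    | some c => if c.rnd then False else G.evenOwns c.pos
  edge := fun x y => match x with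
    | none => False
    | some c =>
        if c.rnd then ∃ c', y = some c' ∧ chalOpenMove c c'
        else ∃ v', G.edge c.pos v' ∧ y = chalUpdate G n c v'
  prio := fun x => match x with
    | none => 0
    | some c => G.prio c.pos
  finalWinEven := fun x => match x with
    | none => True
    | some c => G.finalWinEven c.pos

/-- Winning condition for Even on infinite plays of the `n`-challenge game:
whenever `d` is the dominant priority of the underlying sequence of parity-game
positions, infinitely many round-0 configurations have all challenges of
priorities `≤ d+1` met (equivalently: every opened `d+1`-challenge is eventually
met or reset; in particular this holds when `d` is even). -/
def ChalWinInf (G : Game) (q n : ℕ) (p : ℕ → Option (CCfg G.Pos)) : Prop :=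
  ∀ d, Dominant (fun t => (chalGraph G q n).prio (p t)) d →
    {t | ∃ c, p t = some c ∧ c.rnd = false ∧ d + 1 < c.ptr}.Infinite

/-- Even wins the `n`-challenge game on the parity game `G` (of index `{q,...,0}`,
`q` even). -/
def EvenWinsChallenge (G : Game) (q n : ℕ) : Prop :=
  ∃ σ, WinningStrat (chalGraph G q n) (chalGraph G q n).evenOwns
    (chalGraph G q n).finalWinEven (ChalWinInf G q n) σ

/-- Bisimilarity of labelled transition systems. -/
def Bisimilar {Act : Type} (M N : LTS Act) : Prop :=
  ∃ R : M.State → N.State → Prop, R M.init N.init ∧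
    ∀ s t, R s t → (∀ P, M.val s P ↔ N.val t P) ∧
      (∀ a s', M.trans s a s' → ∃ t', N.trans t a t' ∧ R s' t') ∧
      (∀ a t', N.trans t a t' → ∃ s', M.trans s a s' ∧ R s' t')

/-- A strategy for Even in `M × Ψ` is well-behaved if it reaches each state of `M`
at either one subformula or none (so it agrees with at most one play along each
branch). -/
def WellBehavedMC {Act : Type} (M : LTS Act) (Ψ : Formula Act) (Ω : ℕ → ℕ) (d0 : ℕ)
    (σ : Strategy (mcGame M Ψ Ω d0)) : Prop :=
  ∀ (s : M.State) (φ φ' : Formula Act),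
    ReachesPos (mcGame M Ψ Ω d0) (mcGame M Ψ Ω d0).evenOwns σ (s, φ) →
    ReachesPos (mcGame M Ψ Ω d0) (mcGame M Ψ Ω d0).evenOwns σ (s, φ') → φ = φ'

/-- Modal formulas (decidably). -/
def isModalF {Act : Type} : Formula Act → Bool
  | .dia _ _ | .box _ _ => true
  | _ => false

/-!
Even keeps playing a winning strategy `σ` of `G` on the underlying parity play and ignores the
challenges; Odd can always pass by opening no challenge. The underlying play is then consistent
with `σ`: a finite play ends where Even wins `G`, and an infinite one has an even dominant
priority `d`. Suppose the `d`-challenge were open at almost every position where Even moves.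
Once no priority above `d` occurs any more, the counter `c_d` is never reset, while every visit
to `d` meets the `d`-challenge and forces Odd to reopen it, decrementing `c_d`: impossible
infinitely often.
-/

open Filter

lemma eventuallyConst_of_eventually_succ_le {f : ℕ → ℕ} (h : ∀ᶠ t in atTop, f (t + 1) ≤ f t) :
    EventuallyConst f atTop := by
  obtain ⟨T, hT⟩ := eventually_atTop.1 h
  obtain ⟨N, hN⟩ := WellFoundedLT.antitone_chain_condition (f := fun t => f (T + t))
    (antitone_nat_of_succ_le fun t => hT (T + t) (by omega))
  refine eventuallyConst_atTop.2 ⟨T + N, fun m hm => ?_⟩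
  have := hN (m - T) (by omega)
  rwa [Nat.add_sub_cancel' (by omega), eq_comm] at this

lemma infinite_preimage_div_two_iff {s : Set ℕ} : ((· / 2) ⁻¹' s).Infinite ↔ s.Infinite := by
  refine ⟨fun h hs => h (hs.preimage' fun j _ => ?_),
    fun h => h.preimage fun j _ => ⟨2 * j, by simp⟩⟩
  exact (Set.finite_Icc (2 * j) (2 * j + 1)).subset fun t (ht : t / 2 = j) => ⟨by omega, by omega⟩

section Dominant

variable {f : ℕ → ℕ} {d : ℕ}

lemma Dominant.eq {d' : ℕ} (h : Dominant f d) (h' : Dominant f d') : d = d' :=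
  le_antisymm (h'.2 d h.1) (h.2 d' h'.1)

lemma dominant_comp_div_two_iff : Dominant (fun t => f (t / 2)) d ↔ Dominant f d := by
  have key (e : ℕ) : {t | f (t / 2) = e}.Infinite ↔ {j | f j = e}.Infinite :=
    infinite_preimage_div_two_iff (s := {j | f j = e})
  simp only [Dominant, key]

lemma Dominant.eventually_le {q : ℕ} (hf : ∀ t, f t ≤ q) (h : Dominant f d) :
    ∀ᶠ t in atTop, f t ≤ d := by
  rw [← Nat.cofinite_eq_atTop, eventually_cofinite]
  refine ((Finset.Ioc d q).finite_toSet.biUnion (t := fun e => {t | f t = e}) fun e he => ?_).subset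
    fun t ht => ?_
  · by_contra hinf
    have := h.2 e hinf
    simp only [Finset.coe_Ioc, Set.mem_Ioc] at he
    omega
  · simp only [Set.mem_ofPred_eq, not_le] at ht
    simp only [Finset.coe_Ioc, Set.mem_Ioc, Set.mem_iUnion, Set.mem_ofPred_eq, exists_prop]
    exact ⟨f t, ⟨ht, hf t⟩, rfl⟩

end Dominant

section ChallengeMoves

variable {G : Game} {q n : ℕ} {c c' : CCfg G.Pos} {v : G.Pos}

lemma chalUpdate_eq_some (h : chalUpdate G n c v = some c') :
    c' = ⟨v, if c.ptr ≤ G.prio v then (if Even (G.prio v) then G.prio v + 2 else G.prio v + 1)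
      else c.ptr, fun j => if c.ptr ≤ G.prio v ∧ j < G.prio v then n else c.ctr j, true⟩ := by
  simp only [chalUpdate] at h
  split at h
  · cases h
  · exact (Option.some_inj.mp h).symm

lemma pos_of_chalUpdate_eq_some (h : chalUpdate G n c v = some c') : c'.pos = v := by
  rw [chalUpdate_eq_some h]

lemma rnd_of_chalUpdate_eq_some (h : chalUpdate G n c v = some c') : c'.rnd = true := by
  rw [chalUpdate_eq_some h]

lemma prio_lt_ptr_of_chalUpdate_eq_some (h : chalUpdate G n c v = some c') :
    G.prio v < c'.ptr := by
  rw [chalUpdate_eq_some h]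
  dsimp only
  split_ifs <;> omega

lemma even_ptr_of_chalUpdate_eq_some (hc : Even c.ptr) (h : chalUpdate G n c v = some c') :
    Even c'.ptr := by
  rw [chalUpdate_eq_some h]
  dsimp only
  split_ifs with _ hv
  · exact hv.add even_two
  · exact Nat.even_add_one.2 hv
  · exact hc

lemma ctr_of_chalUpdate_eq_some {i : ℕ} (hi : G.prio v ≤ i) (h : chalUpdate G n c v = some c') :
    c'.ctr i = c.ctr i := by
  rw [chalUpdate_eq_some h]
  exact if_neg fun h => by omega

lemma chalOpenMove.ctr_le {P : Type} {c c' : CCfg P} (h : chalOpenMove c c') (i : ℕ) :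
    c'.ctr i ≤ c.ctr i := by
  rw [h.2.2.2.2.2.2 i]
  split_ifs <;> omega

lemma chalOpenMove.ctr_lt {P : Type} {c c' : CCfg P} {i : ℕ} (h : chalOpenMove c c')
    (hi : Even i) (hle : c'.ptr ≤ i) (hlt : i < c.ptr) : c'.ctr i < c.ctr i := by
  obtain ⟨-, -, -, -, -, hpos, hctr⟩ := h
  have := hpos i hi hle hlt
  rw [hctr i, if_pos ⟨hi, hle, hlt⟩]
  omega

lemma chalOpenMove_pass {P : Type} {c : CCfg P} (hr : c.rnd = true) (hptr : Even c.ptr) :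
    chalOpenMove c { c with rnd := false } :=
  ⟨hr, rfl, rfl, hptr, le_rfl, fun _ _ hle hlt => absurd (hle.trans_lt hlt) (lt_irrefl _),
    fun _ => (if_neg fun h => absurd (h.2.1.trans_lt h.2.2) (lt_irrefl _)).symm⟩

lemma chalGraph_not_edge_none (y : Option (CCfg G.Pos)) : ¬ (chalGraph G q n).edge none y :=
  id

lemma chalGraph_edge_of_rnd_true (hr : c.rnd = true) {y : Option (CCfg G.Pos)} :
    (chalGraph G q n).edge (some c) y ↔ ∃ c', y = some c' ∧ chalOpenMove c c' := by
  simp [chalGraph, hr]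

lemma chalGraph_edge_of_rnd_false (hr : c.rnd = false) {y : Option (CCfg G.Pos)} :
    (chalGraph G q n).edge (some c) y ↔ ∃ v', G.edge c.pos v' ∧ y = chalUpdate G n c v' := by
  simp [chalGraph, hr]

lemma chalOpenMove_of_edge (hr : c.rnd = true) (h : (chalGraph G q n).edge (some c) (some c')) :
    chalOpenMove c c' := by
  obtain ⟨_, hc', hmove⟩ := (chalGraph_edge_of_rnd_true hr).1 h
  rwa [Option.some_inj.1 hc']

lemma chalGraph_edge_some_iff_of_rnd_false (hr : c.rnd = false) :
    (chalGraph G q n).edge (some c) (some c') ↔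
      G.edge c.pos c'.pos ∧ chalUpdate G n c c'.pos = some c' := by
  rw [chalGraph_edge_of_rnd_false hr]
  constructor
  · rintro ⟨v', hv', hu⟩
    rw [pos_of_chalUpdate_eq_some hu.symm]
    exact ⟨hv', hu.symm⟩
  · exact fun ⟨hv', hu⟩ => ⟨_, hv', hu.symm⟩

end ChallengeMoves

section Counter

variable {G : Game} {q n : ℕ}

lemma frequently_met_of_even_dominant (c : ℕ → CCfg G.Pos)
    (hstep : ∀ t, (chalGraph G q n).edge (some (c t)) (some (c (t + 1))))
    {d : ℕ} (hd : Even d) (hle : ∀ᶠ t in atTop, G.prio (c t).pos ≤ d)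
    (hvisit : ∃ᶠ t in atTop, (c t).rnd = false ∧ G.prio (c (t + 1)).pos = d) :
    ∃ᶠ t in atTop, (c t).rnd = false ∧ d + 1 < (c t).ptr := by
  by_contra hopen
  rw [not_frequently] at hopen
  have hanti : ∀ᶠ t in atTop, (c (t + 1)).ctr d ≤ (c t).ctr d := by
    filter_upwards [(tendsto_add_atTop_nat 1).eventually hle] with t ht
    cases hr : (c t).rnd
    · obtain ⟨-, hu⟩ := (chalGraph_edge_some_iff_of_rnd_false hr).1 (hstep t)
      exact (ctr_of_chalUpdate_eq_some ht hu).le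
    · exact (chalOpenMove_of_edge hr (hstep t)).ctr_le d
  -- A visit to `d` meets the `d`-challenge; by `hopen` Odd reopens it at once, decrementing `c_d`.
  have hdec : ∃ᶠ t in atTop, (c (t + 2)).ctr d < (c (t + 1)).ctr d := by
    refine (hvisit.and_eventually ((tendsto_add_atTop_nat 2).eventually hopen)).mono ?_
    rintro t ⟨⟨hr, hprio⟩, hnot⟩
    obtain ⟨-, hu⟩ := (chalGraph_edge_some_iff_of_rnd_false hr).1 (hstep t)
    have hmove : chalOpenMove (c (t + 1)) (c (t + 2)) :=
      chalOpenMove_of_edge (rnd_of_chalUpdate_eq_some hu) (hstep (t + 1))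
    have hmet := prio_lt_ptr_of_chalUpdate_eq_some hu
    have ⟨_, hr', _, hptr, _⟩ := hmove
    have hptr_le : (c (t + 2)).ptr ≤ d + 1 := by simpa [hr'] using hnot
    exact hmove.ctr_lt hd (by grind) (by omega)
  obtain ⟨N, hN⟩ := eventuallyConst_atTop.1
    (eventuallyConst_of_eventually_succ_le (f := fun t => (c t).ctr d) hanti)
  obtain ⟨t, ht, hlt⟩ := frequently_atTop.1 hdec N
  rw [hN (t + 2) (by omega), hN (t + 1) (by omega)] at hlt
  exact lt_irrefl _ hlt

end Counter

section Simulation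

variable {G : Game} {q n : ℕ} {p : ℕ → Option (CCfg G.Pos)} {k : ℕ}

def underlyingHist (G : Game) (h : List (Option (CCfg G.Pos))) : List G.Pos :=
  h.filterMap fun x => x.bind fun c => if c.rnd then none else some c.pos

def underlyingPlay (G : Game) (p : ℕ → Option (CCfg G.Pos)) (j : ℕ) : G.Pos :=
  match p (2 * j) with
  | some c => c.pos
  | none => G.init

def simStrat (G : Game) (n : ℕ) (σ : Strategy G) :
    List (Option (CCfg G.Pos)) → Option (CCfg G.Pos) → Option (CCfg G.Pos)
  | h, some c => chalUpdate G n c (σ (underlyingHist G h) c.pos)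
  | _, none => none

def AlignedAt (G : Game) (p : ℕ → Option (CCfg G.Pos)) (t : ℕ) (c : CCfg G.Pos) : Prop :=
  p t = some c ∧ c.rnd = decide (Even t) ∧ c.pos = underlyingPlay G p (t / 2)

lemma AlignedAt.succ {t : ℕ} {c : CCfg G.Pos} (h : AlignedAt G p t c)
    (he : (chalGraph G q n).edge (some c) (p (t + 1))) :
    p (t + 1) = none ∨ ∃ c', AlignedAt G p (t + 1) c' := by
  obtain ⟨hpc, hr, hpos⟩ := h
  cases hrc : c.rnd
  · have ht : ¬ Even t := by simpa [hrc] using hr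
    obtain ⟨v', -, hu⟩ := (chalGraph_edge_of_rnd_false hrc).1 he
    rcases hpt : p (t + 1) with _ | c'
    · exact Or.inl rfl
    · rw [hpt] at hu
      have ht2 : 2 * ((t + 1) / 2) = t + 1 := by grind
      refine Or.inr ⟨c', hpt, ?_, ?_⟩
      · simpa [rnd_of_chalUpdate_eq_some hu.symm, Nat.even_add_one] using ht
      · simp [underlyingPlay, ht2, hpt]
  · have ht : Even t := by simpa [hrc] using hr
    obtain ⟨c', hpt, -, hr', hpos', -⟩ := (chalGraph_edge_of_rnd_true hrc).1 he
    have ht2 : (t + 1) / 2 = t / 2 := by grind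
    exact Or.inr ⟨c', hpt, by simpa [hr', Nat.even_add_one] using ht, by rw [hpos', hpos, ht2]⟩

lemma alignedAt_of_edges (h0 : p 0 = (chalGraph G q n).init)
    (he : ∀ i < k, (chalGraph G q n).edge (p i) (p (i + 1))) :
    ∀ t ≤ k, p t = none ∨ ∃ c, AlignedAt G p t c := by
  intro t ht
  induction t with
  | zero => exact Or.inr ⟨_, h0, rfl, by simp [underlyingPlay, h0, chalGraph]⟩
  | succ t ih =>
    obtain hnone | ⟨c, hc⟩ := ih (by omega)
    · exact absurd (hnone ▸ he t (by omega)) (chalGraph_not_edge_none _)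
    · exact hc.succ (hc.1 ▸ he t (by omega))

lemma exists_alignedAt_of_lt (h0 : p 0 = (chalGraph G q n).init)
    (he : ∀ i < k, (chalGraph G q n).edge (p i) (p (i + 1))) {t : ℕ} (ht : t < k) :
    ∃ c, AlignedAt G p t c :=
  (alignedAt_of_edges h0 he t ht.le).resolve_left
    fun hnone => chalGraph_not_edge_none _ (hnone ▸ he t ht)

lemma even_ptr_of_edges (hq : Even q) (h0 : p 0 = (chalGraph G q n).init)
    (he : ∀ i < k, (chalGraph G q n).edge (p i) (p (i + 1))) :
    ∀ t ≤ k, ∀ c, p t = some c → Even c.ptr := by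
  intro t ht
  induction t with
  | zero =>
    rintro c hc
    rw [h0] at hc
    cases hc
    exact hq.add even_two
  | succ t ih =>
    rintro c' hc'
    have het := he t (by omega)
    rcases hpt : p t with _ | c
    · exact absurd (hpt ▸ het) (chalGraph_not_edge_none _)
    rw [hpt, hc'] at het
    cases hr : c.rnd
    · exact even_ptr_of_chalUpdate_eq_some (ih (by omega) c hpt)
        ((chalGraph_edge_some_iff_of_rnd_false hr).1 het).2
    · obtain ⟨-, -, -, hptr, -⟩ := chalOpenMove_of_edge hr het
      exact hptr

lemma underlyingHist_map_range {t : ℕ} (h : ∀ s < t, ∃ c, AlignedAt G p s c) :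
    underlyingHist G ((List.range t).map p) = (List.range (t / 2)).map (underlyingPlay G p) := by
  induction t with
  | zero => rfl
  | succ t ih =>
    obtain ⟨c, hpc, hr, hpos⟩ := h t (by omega)
    rw [List.range_succ, List.map_append, underlyingHist, List.filterMap_append, ← underlyingHist,
      ih fun s hs => h s (by omega)]
    cases hrc : c.rnd
    · have ht : (t + 1) / 2 = t / 2 + 1 := by
        have : ¬ Even t := by simpa [hrc] using hr
        grind
      simp [hpc, hrc, ht, List.range_succ, hpos]
    · have ht : (t + 1) / 2 = t / 2 := by
        have : Even t := by simpa [hrc] using hr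
        grind
      simp [hpc, hrc, ht]

end Simulation

section Strategy

variable {G : Game} {q n : ℕ} {σ : Strategy G} {p : ℕ → Option (CCfg G.Pos)}

lemma InfConsistent.pConsistent {H : Game} {owns : H.Pos → Prop} {τ : Strategy H}
    {r : ℕ → H.Pos} (h : InfConsistent H owns τ r) (k : ℕ) : PConsistent H owns τ k r :=
  ⟨h.1, fun i _ => h.2.1 i, fun i _ => h.2.2 i⟩

lemma legalStrat_simStrat (hσ : LegalStrat G G.evenOwns σ) :
    LegalStrat (chalGraph G q n) (chalGraph G q n).evenOwns (simStrat G n σ) := by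
  rintro h (_ | c) hown ⟨y, hy⟩
  · exact absurd hy (chalGraph_not_edge_none y)
  · cases hr : c.rnd
    · obtain ⟨v', hv', -⟩ := (chalGraph_edge_of_rnd_false hr).1 hy
      have hown' : G.evenOwns c.pos := by simpa [chalGraph, hr] using hown
      exact (chalGraph_edge_of_rnd_false hr).2 ⟨_, hσ _ _ hown' ⟨v', hv'⟩, rfl⟩
    · simp [chalGraph, hr] at hown

lemma underlyingPlay_step {k j : ℕ}
    (hp : PConsistent (chalGraph G q n) (chalGraph G q n).evenOwns (simStrat G n σ) k p)
    (hj : 2 * j + 2 < k) :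
    G.edge (underlyingPlay G p j) (underlyingPlay G p (j + 1)) ∧
      (G.evenOwns (underlyingPlay G p j) → underlyingPlay G p (j + 1) =
        σ ((List.range j).map (underlyingPlay G p)) (underlyingPlay G p j)) := by
  have halign := fun t (ht : t < k) => exists_alignedAt_of_lt hp.1 hp.2.1 ht
  obtain ⟨c, hpc, hr, hpos⟩ := halign (2 * j + 1) (by omega)
  obtain ⟨c', hpc', -⟩ := halign (2 * j + 2) hj
  replace hr : c.rnd = false := by simpa [Nat.even_add_one] using hr
  replace hpos : c.pos = underlyingPlay G p j := by rwa [show (2 * j + 1) / 2 = j by omega] at hpos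
  have hpos' : c'.pos = underlyingPlay G p (j + 1) := by simp [underlyingPlay, hpc', mul_add]
  have hedge := hp.2.1 (2 * j + 1) (by omega)
  rw [hpc, hpc', chalGraph_edge_some_iff_of_rnd_false hr] at hedge
  refine ⟨hpos ▸ hpos' ▸ hedge.1, fun hown => ?_⟩
  have hmove : some c' = chalUpdate G n c
      (σ (underlyingHist G ((List.range (2 * j + 1)).map p)) c.pos) := by
    have := hp.2.2 (2 * j + 1) (by omega) (by simpa [hpc, chalGraph, hr, hpos] using hown)
    simp only [hpc, hpc', simStrat] at this
    exact this
  rw [underlyingHist_map_range fun s hs => halign s (by omega),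
    show (2 * j + 1) / 2 = j by omega] at hmove
  rw [← hpos', ← hpos, pos_of_chalUpdate_eq_some hmove.symm]

lemma pConsistent_underlyingPlay {m : ℕ}
    (hp : PConsistent (chalGraph G q n) (chalGraph G q n).evenOwns (simStrat G n σ) (2 * m + 1) p) :
    PConsistent G G.evenOwns σ m (underlyingPlay G p) :=
  ⟨by simp [underlyingPlay, hp.1, chalGraph], fun _ hi => (underlyingPlay_step hp (by omega)).1,
    fun _ hi => (underlyingPlay_step hp (by omega)).2⟩

lemma infConsistent_underlyingPlay
    (hp : InfConsistent (chalGraph G q n) (chalGraph G q n).evenOwns (simStrat G n σ) p) :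
    InfConsistent G G.evenOwns σ (underlyingPlay G p) :=
  have h := fun i => pConsistent_underlyingPlay (hp.pConsistent (2 * (i + 1) + 1))
  ⟨(h 0).1, fun i => (h i).2.1 i (by omega), fun i => (h i).2.2 i (by omega)⟩

end Strategy

section Winning

variable {G : Game} {q n : ℕ} {σ : Strategy G} {p : ℕ → Option (CCfg G.Pos)}

lemma simStrat_finalWin (hq : Even q)
    (hσ : ∀ k v, FinMaxConsistent G G.evenOwns σ k v → G.finalWinEven (v k)) {k : ℕ}
    (hp : FinMaxConsistent (chalGraph G q n) (chalGraph G q n).evenOwns (simStrat G n σ) k p) :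
    (chalGraph G q n).finalWinEven (p k) := by
  obtain ⟨hcons, hdead⟩ := hp
  rcases alignedAt_of_edges hcons.1 hcons.2.1 k le_rfl with hnone | ⟨c, hpk, hr, hpos⟩
  · rw [hnone]
    trivial
  rw [hpk] at hdead ⊢
  cases hrc : c.rnd
  · have hk : k = 2 * (k / 2) + 1 := by
      have : ¬ Even k := by simpa [hrc] using hr
      grind
    have hvdead (w : G.Pos) : ¬ G.edge (underlyingPlay G p (k / 2)) w := fun hw =>
      hdead _ ((chalGraph_edge_of_rnd_false hrc).2 ⟨w, hpos ▸ hw, rfl⟩)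
    have := hσ _ _ ⟨pConsistent_underlyingPlay (hk ▸ hcons), hvdead⟩
    show G.finalWinEven c.pos
    rwa [hpos]
  · have hptr := even_ptr_of_edges hq hcons.1 hcons.2.1 k le_rfl c hpk
    exact absurd ((chalGraph_edge_of_rnd_true hrc).2 ⟨_, rfl, chalOpenMove_pass hrc hptr⟩)
      (hdead _)

lemma simStrat_chalWinInf (hprio : ∀ v, G.prio v ≤ q)
    (hσ : ∀ v, InfConsistent G G.evenOwns σ v → ParityWinInf G v)
    (hp : InfConsistent (chalGraph G q n) (chalGraph G q n).evenOwns (simStrat G n σ) p) :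
    ChalWinInf G q n p := by
  have halign (t : ℕ) : ∃ c, AlignedAt G p t c :=
    exists_alignedAt_of_lt (k := t + 1) hp.1 (fun i _ => hp.2.1 i) t.lt_succ_self
  choose c hpc hr hpos using halign
  set v := underlyingPlay G p
  obtain ⟨d, hdom, hd⟩ := hσ v (infConsistent_underlyingPlay hp)
  intro d' hd'
  have hprio_p : (fun t => (chalGraph G q n).prio (p t)) = fun t => G.prio (v (t / 2)) := by
    funext t
    rw [hpc t, ← hpos t]
    rfl
  obtain rfl : d = d' := hdom.eq (dominant_comp_div_two_iff.1 (hprio_p ▸ hd'))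
  have hstep (t : ℕ) : (chalGraph G q n).edge (some (c t)) (some (c (t + 1))) := by
    rw [← hpc t, ← hpc (t + 1)]
    exact hp.2.1 t
  have hle : ∀ᶠ t in atTop, G.prio (c t).pos ≤ d := by
    simpa only [hpos] using (Nat.tendsto_div_const_atTop two_ne_zero).eventually
      (hdom.eventually_le fun j => hprio (v j))
  have hvisit : ∃ᶠ t in atTop, (c t).rnd = false ∧ G.prio (c (t + 1)).pos = d := by
    refine frequently_atTop.2 fun N => ?_
    obtain ⟨j, hj, hvj⟩ :=
      frequently_atTop.1 (Nat.frequently_atTop_iff_infinite.2 hdom.1) (N + 1)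
    refine ⟨2 * j - 1, by omega, ?_, ?_⟩
    · rw [hr, decide_eq_false_iff_not]
      grind
    · rwa [hpos, show (2 * j - 1 + 1) / 2 = j by omega]
  rw [← Nat.frequently_atTop_iff_infinite]
  exact (frequently_met_of_even_dominant c hstep hd hle hvisit).mono fun t ht => ⟨c t, hpc t, ht⟩

end Winning

theorem even_parity_win_implies_challenge_win_general (G : Game) (q n : ℕ)
    (hq : Even q) (hprio : ∀ v, G.prio v ≤ q) :
    EvenWinsParity G → EvenWinsChallenge G q n := by
  rintro ⟨σ, hlegal, hinf, hfinal⟩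
  exact ⟨simStrat G n σ, legalStrat_simStrat hlegal, fun _ hp => simStrat_chalWinInf hprio hinf hp,
    fun _ _ hp => simStrat_finalWin hq hfinal hp⟩

/-- For every parity game `G` with priorities in `{q,...,0}`, `q`
even (finite plays won by Even iff the final priority is even), and every `n`:
if Even wins `G` then Even wins the `n`-challenge game on `G`. -/
theorem even_parity_win_implies_challenge_win (G : Game) (q n : ℕ)
    (hq : Even q) (hprio : ∀ v, G.prio v ≤ q)
    (hfin : ∀ v, G.finalWinEven v ↔ Even (G.prio v)) :
    EvenWinsParity G → EvenWinsChallenge G q n :=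
  even_parity_win_implies_challenge_win_general G q n hq hprio

end MuCalc
end

section
/- With a single action a, the formula μX.νY.([a]Y ∧ μZ.[a](X ∨ Z)) of the modal mu-calculus is equivalent to μX.[a]X; in particular, it holds in exactly those structures that have no infinite path from the initial state. -/
namespace MuCalc

/-- Auxiliary: the converse transition relation. -/
def relOf (M : LTS Unit) (t s : M.State) : Prop := M.trans s () t

lemma mem_of_box_prefixed {M : LTS Unit} {T : Set M.State}
    (hT : {s | ∀ t, M.trans s () t → t ∈ T} ⊆ T) :
    ∀ s : M.State, Acc (relOf M) s → s ∈ T := by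
  intro s h
  induction h with
  | intro s _ ih => exact hT fun t ht => ih t ht

lemma acc_iff_no_path {M : LTS Unit} (s : M.State) :
    Acc (relOf M) s ↔
      ¬ ∃ p : ℕ → M.State, p 0 = s ∧ ∀ i, M.trans (p i) () (p (i + 1)) := by
  constructor
  · intro h
    induction h with
    | intro s hs ih =>
      rintro ⟨p, hp0, hp⟩
      refine ih (p 1) ?_ ⟨fun n => p (n + 1), rfl, fun i => hp (i + 1)⟩
      · show M.trans s () (p 1); rw [← hp0]; exact hp 0
  · intro h
    by_contra hacc
    have step : ∀ u : M.State, ¬ Acc (relOf M) u →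
        ∃ t, M.trans u () t ∧ ¬ Acc (relOf M) t := by
      intro u hu
      by_contra hcon
      push_neg at hcon
      exact hu (Acc.intro u fun t ht => hcon t ht)
    choose f hf1 hf2 using step
    let p : ℕ → {u : M.State // ¬ Acc (relOf M) u} := fun n =>
      Nat.rec ⟨s, hacc⟩ (fun _ q => ⟨f q.1 q.2, hf2 q.1 q.2⟩) n
    exact h ⟨fun n => (p n).1, rfl, fun i => hf1 (p i).1 (p i).2⟩

lemma sem_big_eq (M : LTS Unit) (ρ : ℕ → Set M.State) :
    sem M (Formula.mu 0 (.nu 1 (.and (.box () (.var 1))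
        (.mu 2 (.box () (.or (.var 0) (.var 2)))))) ) ρ
      = {s | Acc (relOf M) s} := by
  apply Set.Subset.antisymm
  · -- lfp ⊆ Acc set : instantiate with the Acc set, which is prefixed
    intro s hs
    refine hs {s | Acc (relOf M) s} ?_
    -- show F(W) ⊆ W
    intro u hu
    simp only [sem, Set.mem_sUnion, Set.mem_setOf_eq] at hu
    obtain ⟨U, hU, huU⟩ := hu
    -- μZ instantiated at Z := {v | v ∈ U → Acc v}
    have key : ∀ v ∈ U, v ∈ ({v | v ∈ U → Acc (relOf M) v} : Set M.State) := by
      intro v hv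
      have := (hU hv).2
      simp only [sem, Set.mem_sInter, Set.mem_setOf_eq] at this
      refine this {v | v ∈ U → Acc (relOf M) v} ?_
      intro w hw hwU
      simp only [Set.mem_setOf_eq, Function.update] at hw
      constructor
      intro t ht
      have htU : t ∈ U := by
        have := (hU hwU).1
        simp only [sem, Set.mem_setOf_eq, Function.update] at this
        simpa using this t ht
      have := hw t ht
      simp only [Set.mem_union, Set.mem_setOf_eq] at this
      rcases this with h1 | h1
      · simpa using h1
      · exact (by simpa using h1 : t ∈ U → Acc (relOf M) t) htU
    exact key u huU huU
  · -- Acc set ⊆ lfp : any prefixed point T contains Acc set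
    intro s hs
    intro T hT
    apply hT
    -- s ∈ F(T), witnessed by U := Acc set
    simp only [sem, Set.mem_sUnion, Set.mem_setOf_eq]
    refine ⟨{u | Acc (relOf M) u}, ?_, hs⟩
    intro u hu
    constructor
    · -- box part: successors of an Acc state are Acc
      simp only [sem, Set.mem_setOf_eq, Function.update]
      intro t ht
      simpa using hu.inv ht
    · -- μZ part: Acc u implies u in every prefixed point of H
      simp only [sem, Set.mem_sInter, Set.mem_setOf_eq]
      intro Z hZ
      refine mem_of_box_prefixed ?_ u hu
      intro v hv
      apply hZ
      simp only [Set.mem_setOf_eq, Function.update]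
      intro t ht
      simp only [Set.mem_union]
      exact Or.inr (by simpa using hv t ht)

lemma sem_mubox_eq (M : LTS Unit) (ρ : ℕ → Set M.State) :
    sem M (Formula.mu 0 (.box () (.var 0))) ρ = {s | Acc (relOf M) s} := by
  apply Set.Subset.antisymm
  · intro s hs
    refine hs {s | Acc (relOf M) s} ?_
    intro u hu
    simp only [sem, Set.mem_setOf_eq, Function.update] at hu ⊢
    exact Acc.intro u fun t ht => by simpa using hu t ht
  · intro s hs T hT
    refine mem_of_box_prefixed ?_ s hs
    intro v hv
    apply hT
    simp only [sem, Set.mem_setOf_eq, Function.update]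
    intro t ht
    simpa using hv t ht

/-- With a single action, `μX.νY.([a]Y ∧ μZ.[a](X ∨ Z))` is
equivalent to `μX.[a]X`; in particular it holds exactly in the structures with
no infinite path from the initial state. -/
theorem example_formula_semantically_sigma1 :
    FEquiv
      (Formula.mu 0 (.nu 1 (.and (.box () (.var 1))
        (.mu 2 (.box () (.or (.var 0) (.var 2)))))))
      (Formula.mu 0 (.box () (.var 0))) ∧
    ∀ M : LTS Unit,
      Sat M (Formula.mu 0 (.nu 1 (.and (.box () (.var 1))
          (.mu 2 (.box () (.or (.var 0) (.var 2))))))) ↔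
        ¬ ∃ p : ℕ → M.State, p 0 = M.init ∧ ∀ i, M.trans (p i) () (p (i + 1)) := by
  have key : ∀ M : LTS Unit,
      Sat M (Formula.mu 0 (.nu 1 (.and (.box () (.var 1))
          (.mu 2 (.box () (.or (.var 0) (.var 2))))))) ↔ Acc (relOf M) M.init := by
    intro M
    unfold Sat
    rw [sem_big_eq]
    rfl
  constructor
  · intro M
    unfold Sat
    rw [sem_big_eq, sem_mubox_eq]
  · intro M
    rw [key M, acc_iff_no_path]


end MuCalc
end

section
/- With a single action a and distinct propositional variables A and B, the formula νY.μX.((A ∧ ⟨a⟩X) ∨ (B ∧ ⟨a⟩Y)) of the modal mu-calculus is not equivalent to any formula in Σμ2 (i.e., to any formula of index {1,0}). -/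
section WellFoundedRank

universe u

variable {α β : Type u} {r : α → α → Prop} {s : β → β → Prop}

namespace IsWellFounded

theorem rank_le_of_forall_rank_lt [IsWellFounded α r] {a : α} {o : Ordinal}
    (h : ∀ b, r b a → rank r b < o) : rank r a ≤ o := by
  rw [rank_eq]
  exact Ordinal.iSup_le fun ⟨b, hb⟩ => Order.succ_le_of_lt (h b hb)

theorem rank_le_rank_of_map [IsWellFounded α r] [IsWellFounded β s] (f : α → β)
    (hf : ∀ a b, r a b → s (f a) (f b)) (a : α) : rank r a ≤ rank s (f a) := by
  induction a using IsWellFounded.induction r with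
  | _ a ih =>
    exact rank_le_of_forall_rank_lt fun b hb => (ih b hb).trans_lt (rank_lt_of_rel (hf b a hb))

end IsWellFounded

def Option.RelTop (r : α → α → Prop) : Option α → Option α → Prop
  | some a, some b => r a b
  | some _, none => True
  | none, _ => False

instance [IsWellFounded α r] : IsWellFounded (Option α) (Option.RelTop r) := by
  have hsome : ∀ a, Acc (Option.RelTop r) (some a) := fun a => by
    induction a using IsWellFounded.induction r with
    | _ a ih =>
      refine ⟨_, fun o ho => ?_⟩
      cases o with
      | none => exact ho.elim
      | some b => exact ih b ho
  refine ⟨⟨fun o => ⟨_, fun o' ho' => ?_⟩⟩⟩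
  cases o' with
  | none => cases o <;> exact ho'.elim
  | some b => exact hsome b

end WellFoundedRank

section Sequences

variable {α : Type*}

theorem exists_forall_of_forall_exists_of_antitone {ι : Type*} [Finite ι] {P : ι → ℕ → Prop}
    (hP : ∀ i, Antitone (P i)) (h : ∀ n, ∃ i, P i n) : ∃ i, ∀ n, P i n := by
  have := iInf_iSup_of_antitone hP
  simp only [iInf_Prop_eq, iSup_Prop_eq] at this
  exact this ▸ h

theorem exists_seq_of_forall_exists {S : Set α} {r : α → α → Prop}
    (h : ∀ a ∈ S, ∃ b ∈ S, r b a) {a : α} (ha : a ∈ S) :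
    ∃ f : ℕ → α, ∀ n, f n ∈ S ∧ r (f (n + 1)) (f n) := by
  have hnacc : ¬Acc (fun b a => b ∈ S ∧ r b a) a := by
    intro hacc
    induction hacc with
    | intro a _ ih =>
      obtain ⟨b, hb, hba⟩ := h a ha
      exact ih b ⟨hb, hba⟩ hb
  obtain ⟨f, rfl, hf⟩ := not_acc_iff_exists_descending_chain.1 hnacc
  exact ⟨f, fun n => ⟨n.casesOn ha fun n => (hf n).1, (hf n).2⟩⟩

theorem List.exists_append_singleton_prefix {u w : List α} (h : u <+: w) (hne : u ≠ w) :
    ∃ b, u ++ [b] <+: w := by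
  obtain ⟨_ | ⟨b, t⟩, rfl⟩ := h
  · exact absurd (List.append_nil u).symm hne
  · exact ⟨b, t, by simp⟩

theorem Function.update_apply_eval {ι κ : Type*} [DecidableEq ι] {S : Type*} (ρ : ι → κ → S)
    (X : ι) (σ : κ → S) (q : κ) :
    (fun Y => Function.update ρ X σ Y q) = Function.update (fun Y => ρ Y q) X (σ q) :=
  funext fun Y => Function.apply_update (fun _ h => h q) ρ X σ Y

theorem Function.iInf_update {ι κ L : Type*} [DecidableEq ι] [CompleteLattice L] (ρ : κ → ι → L)
    (Z : ι) (G : κ → L) :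
    ⨅ n, Function.update (ρ n) Z (G n) = Function.update (⨅ n, ρ n) Z (⨅ n, G n) := by
  funext Y
  by_cases hY : Y = Z
  · subst hY; simp
  · simp [hY]

end Sequences

namespace MeasureTheory

variable {α : Type*} [TopologicalSpace α]

theorem AnalyticSet.union {s t : Set α} (hs : AnalyticSet s) (ht : AnalyticSet t) :
    AnalyticSet (s ∪ t) := by
  rw [Set.union_eq_iUnion]
  exact AnalyticSet.iUnion (Bool.forall_bool.2 ⟨ht, hs⟩)

theorem AnalyticSet.inter [T2Space α] {s t : Set α} (hs : AnalyticSet s) (ht : AnalyticSet t) :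
    AnalyticSet (s ∩ t) := by
  rw [Set.inter_eq_iInter]
  exact AnalyticSet.iInter (Bool.forall_bool.2 ⟨ht, hs⟩)

def CoanalyticSet (s : Set α) : Prop := AnalyticSet sᶜ

theorem CoanalyticSet.inter {s t : Set α} (hs : CoanalyticSet s) (ht : CoanalyticSet t) :
    CoanalyticSet (s ∩ t) := by
  unfold CoanalyticSet
  rw [Set.compl_inter]
  exact AnalyticSet.union hs ht

theorem CoanalyticSet.union [T2Space α] {s t : Set α} (hs : CoanalyticSet s)
    (ht : CoanalyticSet t) : CoanalyticSet (s ∪ t) := by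
  unfold CoanalyticSet
  rw [Set.compl_union]
  exact AnalyticSet.inter hs ht

theorem CoanalyticSet.iInter {ι : Type*} [Countable ι] {s : ι → Set α}
    (hs : ∀ i, CoanalyticSet (s i)) : CoanalyticSet (⋂ i, s i) := by
  unfold CoanalyticSet
  rw [Set.compl_iInter]
  exact AnalyticSet.iUnion hs

theorem CoanalyticSet.preimage [PolishSpace α] {β : Type*} [TopologicalSpace β] [T2Space β]
    {s : Set β} (hs : CoanalyticSet s) {f : α → β} (hf : Continuous f) :
    CoanalyticSet (f ⁻¹' s) :=
  AnalyticSet.preimage hs hf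

theorem _root_.IsOpen.coanalyticSet [PolishSpace α] {s : Set α} (hs : IsOpen s) :
    CoanalyticSet s :=
  hs.isClosed_compl.analyticSet

end MeasureTheory

namespace MuCalc

open MeasureTheory

section Semantics

variable {Act : Type} (M : LTS Act)

theorem sem_monotone (φ : Formula Act) : Monotone (sem M φ) := by
  induction φ with
  | var X => exact fun _ _ h => h X
  | and φ ψ ih₁ ih₂ => exact fun _ _ h => Set.inter_subset_inter (ih₁ h) (ih₂ h)
  | or φ ψ ih₁ ih₂ => exact fun _ _ h => Set.union_subset_union (ih₁ h) (ih₂ h)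
  | dia a φ ih => exact fun _ _ h _ ⟨t, hst, ht⟩ => ⟨t, hst, ih h ht⟩
  | box a φ ih => exact fun _ _ h _ hs t hst => ih h (hs t hst)
  | mu X φ ih =>
    exact fun _ _ h => Set.sInter_subset_sInter fun T hT =>
      (ih (update_le_update_iff.2 ⟨le_rfl, fun Y _ => h Y⟩)).trans hT
  | nu X φ ih =>
    exact fun _ _ h => Set.sUnion_subset_sUnion fun T hT =>
      hT.trans (ih (update_le_update_iff.2 ⟨le_rfl, fun Y _ => h Y⟩))
  | _ => exact fun _ _ _ => le_rfl

def semUpdate (φ : Formula Act) (X : ℕ) (ρ : ℕ → Set M.State) : Set M.State →o Set M.State :=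
  ⟨fun T => sem M φ (Function.update ρ X T), fun _ _ h =>
    sem_monotone M φ (Function.update_mono h)⟩

theorem sem_mu (φ : Formula Act) (X : ℕ) (ρ : ℕ → Set M.State) :
    sem M (.mu X φ) ρ = OrderHom.lfp (semUpdate M φ X ρ) := rfl

theorem sem_nu (φ : Formula Act) (X : ℕ) (ρ : ℕ → Set M.State) :
    sem M (.nu X φ) ρ = OrderHom.gfp (semUpdate M φ X ρ) := rfl

theorem sem_congr (φ : Formula Act) {ρ ρ' : ℕ → Set M.State}
    (h : ∀ Y ∈ freeVars φ, ρ Y = ρ' Y) : sem M φ ρ = sem M φ ρ' := by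
  induction φ generalizing ρ ρ' with
  | var X => exact h X rfl
  | and φ ψ ih₁ ih₂ =>
    exact congrArg₂ (· ∩ ·) (ih₁ fun Y hY => h Y (.inl hY)) (ih₂ fun Y hY => h Y (.inr hY))
  | or φ ψ ih₁ ih₂ =>
    exact congrArg₂ (· ∪ ·) (ih₁ fun Y hY => h Y (.inl hY)) (ih₂ fun Y hY => h Y (.inr hY))
  | dia a φ ih => simp only [sem, ih h]
  | box a φ ih => simp only [sem, ih h]
  | mu X φ ih | nu X φ ih =>
    have key : ∀ T, sem M φ (Function.update ρ X T) = sem M φ (Function.update ρ' X T) :=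
      fun T => ih fun Y hY => by
        by_cases hYX : Y = X
        · simp [hYX]
        · simp [hYX, h Y ⟨hY, hYX⟩]
    simp only [sem, key]
  | _ => rfl

variable {M}

theorem notMem_sem_mu_iff {φ : Formula Act} {X : ℕ} {ρ : ℕ → Set M.State} {s : M.State} :
    s ∉ sem M (.mu X φ) ρ ↔ ∃ τ : M.State → Bool,
      sem M φ (Function.update ρ X {t | τ t = true}) ⊆ {t | τ t = true} ∧ τ s = false := by
  simp only [sem, Set.mem_sInter, Set.mem_ofPred_eq, not_forall, exists_prop]
  constructor
  · rintro ⟨T, hT, hs⟩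
    classical
    exact ⟨fun t => decide (t ∈ T), by simpa using hT, by simpa using hs⟩
  · rintro ⟨τ, hτ, hs⟩
    exact ⟨_, hτ, by simpa using hs⟩

end Semantics

section CoContinuity

variable {Act : Type} {M : LTS Act}

def LTS.ImageFinite (M : LTS Act) : Prop := ∀ s a, {t | M.trans s a t}.Finite

theorem priority_eq_zero_of_nu {Ω : ℕ → ℕ} {Z : ℕ} {φ : Formula Act}
    (hPA : PA Ω (.nu Z φ)) (hΩ : ∀ X ∈ fixVars (.nu Z φ), Ω X ∈ ({0, 1} : Set ℕ)) : Ω Z = 0 := by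
  rcases hΩ Z (Set.mem_insert _ _) with h | h
  · exact h
  · exact absurd (h ▸ hPA.1) Nat.not_even_one

theorem exists_forall_mem_of_forall_mem_sem_dia (hM : M.ImageFinite) {a : Act} {φ : Formula Act}
    {ρ : ℕ → ℕ → Set M.State} (hρ : Antitone ρ) {s : M.State}
    (hs : ∀ n, s ∈ sem M (.dia a φ) (ρ n)) : ∃ t, M.trans s a t ∧ ∀ n, t ∈ sem M φ (ρ n) := by
  have : Finite {t // M.trans s a t} := (hM s a).to_subtype
  obtain ⟨⟨t, hst⟩, ht⟩ := exists_forall_of_forall_exists_of_antitone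
    (P := fun (t : {t // M.trans s a t}) n => t.1 ∈ sem M φ (ρ n))
    (fun t _ _ hnm ht => sem_monotone M φ (hρ hnm) ht)
    (fun n => by obtain ⟨t, hst, ht⟩ := hs n; exact ⟨⟨t, hst⟩, ht⟩)
  exact ⟨t, hst, ht⟩

theorem iInf_sem_le_sem_iInf {Ω : ℕ → ℕ} (hM : M.ImageFinite) (φ : Formula Act)
    (hPA : PA Ω φ) (hΩ : ∀ X ∈ fixVars φ, Ω X ∈ ({0, 1} : Set ℕ)) {ρ : ℕ → ℕ → Set M.State}
    (hρ : Antitone ρ) (hconst : ∀ Y, Ω Y ≠ 0 → ∀ n, ρ n Y = ρ 0 Y) :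
    ⨅ n, sem M φ (ρ n) ≤ sem M φ (⨅ n, ρ n) := by
  induction φ generalizing ρ with
  | var X => exact (iInf_apply (f := ρ) (a := X)).ge
  | and φ ψ ih₁ ih₂ =>
    exact le_inf
      ((iInf_mono fun n => inf_le_left).trans (ih₁ hPA.1 (fun X hX => hΩ X (.inl hX)) hρ hconst))
      ((iInf_mono fun n => inf_le_right).trans (ih₂ hPA.2 (fun X hX => hΩ X (.inr hX)) hρ hconst))
  | or φ ψ ih₁ ih₂ =>
    have h := Set.iInter_union_of_antitone ((sem_monotone M φ).comp_antitone hρ)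
      ((sem_monotone M ψ).comp_antitone hρ)
    exact h.le.trans (Set.union_subset_union
      (ih₁ hPA.1 (fun X hX => hΩ X (.inl hX)) hρ hconst)
      (ih₂ hPA.2 (fun X hX => hΩ X (.inr hX)) hρ hconst))
  | dia a φ ih =>
    intro s hs
    obtain ⟨t, hst, ht⟩ := exists_forall_mem_of_forall_mem_sem_dia hM hρ (Set.mem_iInter.1 hs)
    exact ⟨t, hst, ih hPA hΩ hρ hconst (Set.mem_iInter.2 ht)⟩
  | box a φ ih =>
    exact fun s hs t hst =>
      ih hPA hΩ hρ hconst (Set.mem_iInter.2 fun n => Set.mem_iInter.1 hs n t hst)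
  | mu X φ ih =>
    have hfree : ∀ Y ∈ freeVars (Formula.mu X φ), Ω Y ≠ 0 := fun Y hY =>
      (hPA.1.pos.trans_le (hPA.2.1 Y hY.1)).ne'
    have h0 : ∀ n, sem M (.mu X φ) (ρ n) = sem M (.mu X φ) (ρ 0) := fun n =>
      sem_congr M _ fun Y hY => hconst Y (hfree Y hY) n
    have hinf : sem M (.mu X φ) (⨅ n, ρ n) = sem M (.mu X φ) (ρ 0) :=
      sem_congr M _ fun Y hY => by simp [hconst Y (hfree Y hY)]
    simp [h0, hinf]
  | nu Z φ ih =>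
    have hZ : Ω Z = 0 := priority_eq_zero_of_nu hPA hΩ
    set G := fun n => sem M (.nu Z φ) (ρ n)
    have hG : Antitone G := (sem_monotone M _).comp_antitone hρ
    rw [sem_nu]
    refine OrderHom.le_gfp _ ?_
    calc ⨅ n, G n = ⨅ n, sem M φ (Function.update (ρ n) Z (G n)) :=
          iInf_congr fun n => OrderHom.map_gfp (semUpdate M φ Z (ρ n)) |>.symm
      _ ≤ sem M φ (⨅ n, Function.update (ρ n) Z (G n)) := by
          refine ih hPA.2.2 (fun X hX => hΩ X (Set.mem_insert_of_mem _ hX))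
            (fun n m hnm => update_le_update_iff.2 ⟨hG hnm, fun Y _ => hρ hnm Y⟩) fun Y hY n => ?_
          have hYZ : Y ≠ Z := fun h => hY (h ▸ hZ)
          simp [hYZ, hconst Y hY n]
      _ = semUpdate M φ Z (⨅ n, ρ n) (⨅ n, G n) := by rw [Function.iInf_update]; rfl
  | _ => exact iInf_le (fun n => sem M _ (ρ n)) 0

open OmegaCompletePartialOrder in
theorem sem_nu_eq_iInf_iterate {Ω : ℕ → ℕ} (hM : M.ImageFinite) {Z : ℕ} {φ : Formula Act}
    (hPA : PA Ω (.nu Z φ)) (hΩ : ∀ X ∈ fixVars (.nu Z φ), Ω X ∈ ({0, 1} : Set ℕ))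
    (ρ : ℕ → Set M.State) :
    sem M (.nu Z φ) ρ = ⨅ n, (semUpdate M φ Z ρ)^[n] Set.univ := by
  refine fixedPoints.gfp_eq_sInf_iterate (semUpdate M φ Z ρ)
    (ωScottContinuous.of_map_ωSup_of_orderHom (f := (semUpdate M φ Z ρ).dual) fun c => ?_)
  have hZ : Ω Z = 0 := priority_eq_zero_of_nu hPA hΩ
  let T : ℕ → Set M.State := fun n => OrderDual.ofDual (c n)
  -- a chain in the order dual is a decreasing sequence of sets, with `ωSup` its intersection
  change sem M φ (Function.update ρ Z (⨅ n, T n)) = ⨅ n, sem M φ (Function.update ρ Z (T n))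
  have hupd : Function.update ρ Z (⨅ n, T n) = ⨅ n, Function.update ρ Z (T n) := by
    rw [Function.iInf_update (fun _ => ρ), iInf_const]
  have hanti : Antitone fun n => Function.update ρ Z (T n) :=
    fun n m hnm => Function.update_mono (c.monotone hnm)
  rw [hupd]
  refine le_antisymm (le_iInf fun n => sem_monotone M φ (iInf_le _ n)) ?_
  refine iInf_sem_le_sem_iInf hM φ hPA.2.2 (fun X hX => hΩ X (Set.mem_insert_of_mem _ hX))
    hanti fun Y hY n => ?_
  have hYZ : Y ≠ Z := fun h => hY (h ▸ hZ)
  simp [hYZ]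

end CoContinuity

section BinaryTree

instance : PolishSpace (List Bool → Bool) :=
  instPolishSpaceOfSeparableSpaceOfIsCompletelyMetrizableSpace

abbrev binTree (x : List Bool → Bool) : LTS Unit where
  State := List Bool
  init := []
  trans s _ t := t = s ++ [false] ∨ t = s ++ [true]
  val s P := P = 0 ∨ P = 1 ∧ x s = true

theorem binTree_imageFinite (x : List Bool → Bool) : (binTree x).ImageFinite := fun s _ =>
  (Set.toFinite {s ++ [false], s ++ [true]}).subset fun _ ht => ht

variable {x : List Bool → Bool} {a : Unit} {φ : Formula Unit} {ρ : ℕ → Set (List Bool)}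
  {s : List Bool}

theorem mem_sem_dia_binTree :
    s ∈ sem (binTree x) (.dia a φ) ρ ↔
      s ++ [false] ∈ sem (binTree x) φ ρ ∨ s ++ [true] ∈ sem (binTree x) φ ρ := by
  constructor
  · rintro ⟨t, rfl | rfl, ht⟩ <;> tauto
  · rintro (h | h)
    exacts [⟨_, .inl rfl, h⟩, ⟨_, .inr rfl, h⟩]

theorem mem_sem_box_binTree :
    s ∈ sem (binTree x) (.box a φ) ρ ↔
      s ++ [false] ∈ sem (binTree x) φ ρ ∧ s ++ [true] ∈ sem (binTree x) φ ρ :=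
  ⟨fun h => ⟨h _ (.inl rfl), h _ (.inr rfl)⟩, fun ⟨h₀, h₁⟩ _ ht => ht.elim (· ▸ h₀) (· ▸ h₁)⟩

theorem isOpen_setOf_apply_apply {Q : Type} [TopologicalSpace Q] {g : Q → List Bool → Bool}
    (hg : Continuous g) (s : List Bool) (p : Bool → Prop) : IsOpen {q | p (g q s)} :=
  (isOpen_discrete {b | p b}).preimage ((continuous_apply s).comp hg)

end BinaryTree

section Sigma2Coanalytic

def SemCoanalytic (φ : Formula Unit) : Prop :=
  ∀ {Q : Type} [TopologicalSpace Q] [PolishSpace Q] {g : Q → List Bool → Bool}, Continuous g →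
    ∀ {ρ : ℕ → Q → Set (List Bool)}, (∀ X s, CoanalyticSet {q | s ∈ ρ X q}) →
      ∀ s, CoanalyticSet {q | s ∈ sem (binTree (g q)) φ (fun X => ρ X q)}

/-- `s ∉ μX.φ` is witnessed by a prefixed point avoiding `s`; coding it by a labelling turns this
into a projection along the Polish space of labellings. -/
theorem SemCoanalytic.mu {X : ℕ} {φ : Formula Unit} (hφ : SemCoanalytic φ) :
    SemCoanalytic (.mu X φ) := by
  intro Q _ _ g hg ρ hρ s
  let ρ' : ℕ → Q × (List Bool → Bool) → Set (List Bool) :=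
    Function.update (fun Y p => ρ Y p.1) X fun p => {t | p.2 t = true}
  have hρ' : ∀ Y t, CoanalyticSet {p | t ∈ ρ' Y p} := by
    intro Y t
    by_cases hY : Y = X
    · subst hY
      simpa [ρ'] using (isOpen_setOf_apply_apply continuous_snd t (· = true)).coanalyticSet
    · simpa [ρ', hY] using (hρ Y t).preimage continuous_fst
  have hlabel : ∀ t b, IsClosed {p : Q × (List Bool → Bool) | p.2 t = b} := fun t b =>
    isClosed_eq ((continuous_apply t).comp continuous_snd) continuous_const
  have hcompl : {q | s ∈ sem (binTree (g q)) (.mu X φ) (fun Y => ρ Y q)}ᶜ =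
      Prod.fst '' ((⋂ t, {p | t ∈ sem (binTree (g p.1)) φ (fun Y => ρ' Y p)}ᶜ ∪
        {p | p.2 t = true}) ∩ {p | p.2 s = false}) := by
    ext q
    simp only [Set.mem_compl_iff, Set.mem_ofPred_eq, Set.mem_image, Prod.exists,
      exists_and_right, exists_eq_right, Set.mem_inter_iff, Set.mem_iInter, Set.mem_union,
      Function.update_apply_eval, ρ']
    refine notMem_sem_mu_iff.trans (exists_congr fun τ => and_congr_left' ?_)
    simp only [Set.subset_def, imp_iff_not_or]
    rfl
  unfold CoanalyticSet
  rw [hcompl]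
  exact (AnalyticSet.inter (AnalyticSet.iInter fun t => AnalyticSet.union
    (hφ (hg.comp continuous_fst) hρ' t) (hlabel t true).analyticSet)
    (hlabel s false).analyticSet).image_of_continuous continuous_fst

theorem SemCoanalytic.nu {Ω : ℕ → ℕ} {Z : ℕ} {φ : Formula Unit} (hPA : PA Ω (.nu Z φ))
    (hΩ : ∀ X ∈ fixVars (.nu Z φ), Ω X ∈ ({0, 1} : Set ℕ)) (hφ : SemCoanalytic φ) :
    SemCoanalytic (.nu Z φ) := by
  intro Q _ _ g hg ρ hρ s
  let F q := semUpdate (binTree (g q)) φ Z (fun Y => ρ Y q)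
  have hF : ∀ n t, CoanalyticSet {q | t ∈ (F q)^[n] Set.univ} := by
    intro n
    induction n with
    | zero => exact fun _ => isOpen_univ.coanalyticSet
    | succ n ih =>
      intro t
      have := hφ hg (ρ := Function.update ρ Z fun q => (F q)^[n] Set.univ) (fun Y t' => by
        by_cases hY : Y = Z
        · subst hY; simpa using ih t'
        · simpa [hY] using hρ Y t') t
      simp only [Function.update_apply_eval] at this
      simp only [Function.iterate_succ_apply']
      exact this
  have hiter : {q | s ∈ sem (binTree (g q)) (.nu Z φ) (fun Y => ρ Y q)} =
      ⋂ n, {q | s ∈ (F q)^[n] Set.univ} := by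
    ext q
    rw [Set.mem_ofPred_eq, sem_nu_eq_iInf_iterate (binTree_imageFinite _) hPA hΩ]
    simp [F]
  rw [hiter]
  exact CoanalyticSet.iInter fun n => hF n s

theorem semCoanalytic_of_sigma2 {Ω : ℕ → ℕ} {φ : Formula Unit} (hPA : PA Ω φ)
    (hΩ : ∀ X ∈ fixVars φ, Ω X ∈ ({0, 1} : Set ℕ)) : SemCoanalytic φ := by
  induction φ with
  | tt => exact fun _ _ _ _ => isOpen_univ.coanalyticSet
  | ff => exact fun _ _ _ _ => isOpen_empty.coanalyticSet
  | prop P =>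
    exact fun hg _ _ s =>
      (isOpen_setOf_apply_apply hg s fun b => P = 0 ∨ P = 1 ∧ b = true).coanalyticSet
  | nprop P =>
    exact fun hg _ _ s =>
      (isOpen_setOf_apply_apply hg s fun b => ¬(P = 0 ∨ P = 1 ∧ b = true)).coanalyticSet
  | var X => exact fun _ _ hρ s => hρ X s
  | and φ ψ ih₁ ih₂ =>
    exact fun hg _ hρ s => (ih₁ hPA.1 (fun X hX => hΩ X (.inl hX)) hg hρ s).inter
      (ih₂ hPA.2 (fun X hX => hΩ X (.inr hX)) hg hρ s)
  | or φ ψ ih₁ ih₂ =>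
    exact fun hg _ hρ s => (ih₁ hPA.1 (fun X hX => hΩ X (.inl hX)) hg hρ s).union
      (ih₂ hPA.2 (fun X hX => hΩ X (.inr hX)) hg hρ s)
  | dia a φ ih =>
    intro Q _ _ g hg ρ hρ s
    rw [show {q | s ∈ sem (binTree (g q)) (.dia a φ) (fun X => ρ X q)} = _ ∪ _ from
      Set.ext fun q => mem_sem_dia_binTree]
    exact (ih hPA hΩ hg hρ _).union (ih hPA hΩ hg hρ _)
  | box a φ ih =>
    intro Q _ _ g hg ρ hρ s
    rw [show {q | s ∈ sem (binTree (g q)) (.box a φ) (fun X => ρ X q)} = _ ∩ _ from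
      Set.ext fun q => mem_sem_box_binTree]
    exact (ih hPA hΩ hg hρ _).inter (ih hPA hΩ hg hρ _)
  | mu X φ ih => exact SemCoanalytic.mu (ih hPA.2.2 fun Y hY => hΩ Y (Set.mem_insert_of_mem _ hY))
  | nu Z φ ih =>
    exact SemCoanalytic.nu hPA hΩ (ih hPA.2.2 fun Y hY => hΩ Y (Set.mem_insert_of_mem _ hY))

end Sigma2Coanalytic

section Psi

/-- The body `(A ∧ ⟨a⟩X) ∨ (B ∧ ⟨a⟩Y)`, with `A = prop 0`, `B = prop 1`, `Y = var 0` and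
`X = var 1`. -/
def psiBody : Formula Unit :=
  .or (.and (.prop 0) (.dia () (.var 1))) (.and (.prop 1) (.dia () (.var 0)))

/-- Some branch of the tree passes through infinitely many nodes labelled `true`. -/
def HasBChain (x : List Bool → Bool) : Prop :=
  ∃ g : ℕ → List Bool, ∀ n, x (g n) = true ∧ g n <+: g (n + 1) ∧ g n ≠ g (n + 1)

variable {x : List Bool → Bool}

theorem mem_sem_psiBody {ρ : ℕ → Set (List Bool)} {s : List Bool} :
    s ∈ sem (binTree x) psiBody ρ ↔
      (∃ b, s ++ [b] ∈ ρ 1) ∨ x s = true ∧ ∃ b, s ++ [b] ∈ ρ 0 := by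
  simp [psiBody, sem, Bool.exists_bool]

theorem sem_mu_psiBody (Y : Set (List Bool)) :
    sem (binTree x) (.mu 1 psiBody) (Function.update (fun _ => ∅) 0 Y) =
      {v | ∃ u, v <+: u ∧ x u = true ∧ ∃ b, u ++ [b] ∈ Y} := by
  set F := semUpdate (binTree x) psiBody 1 (Function.update (fun _ => ∅) 0 Y)
  have hF : ∀ T v, v ∈ F T ↔ (∃ b, v ++ [b] ∈ T) ∨ x v = true ∧ ∃ b, v ++ [b] ∈ Y := by
    intro T v
    exact mem_sem_psiBody.trans (by simp)
  rw [sem_mu]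
  apply le_antisymm
  · refine OrderHom.lfp_le F fun v hv => ?_
    rcases (hF _ v).1 hv with ⟨b, u, hvu, hu⟩ | ⟨hv, hY⟩
    · exact ⟨u, (List.prefix_append v [b]).trans hvu, hu⟩
    · exact ⟨v, List.prefix_rfl, hv, hY⟩
  · rintro v ⟨u, ⟨t, rfl⟩, hu⟩
    induction t generalizing v with
    | nil => exact OrderHom.map_lfp F ▸ (hF _ v).2 (.inr (by simpa using hu))
    | cons b t ih =>
      exact OrderHom.map_lfp F ▸ (hF _ v).2 (.inl ⟨b, ih (v := v ++ [b]) (by simpa using hu)⟩)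

theorem sat_psi_iff_hasBChain :
    Sat (binTree x) (.nu 0 (.mu 1 psiBody)) ↔ HasBChain x := by
  rw [Sat, sem_nu]
  set F := semUpdate (binTree x) (.mu 1 psiBody) 0 (fun _ => ∅)
  have hF : ∀ T v, v ∈ F T ↔ ∃ u, v <+: u ∧ x u = true ∧ ∃ b, u ++ [b] ∈ T := fun T v => by
    simp [F, semUpdate, sem_mu_psiBody]
  constructor
  · intro hsat
    set Y := OrderHom.gfp F
    have hY : ∀ v ∈ Y, ∃ u, v <+: u ∧ x u = true ∧ ∃ b, u ++ [b] ∈ Y := fun v hv =>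
      (hF Y v).1 (OrderHom.map_gfp F ▸ hv)
    have hS : ∀ u ∈ {u | x u = true ∧ ∃ b, u ++ [b] ∈ Y},
        ∃ u' ∈ {u | x u = true ∧ ∃ b, u ++ [b] ∈ Y}, u <+: u' ∧ u ≠ u' := by
      rintro u ⟨-, b, hb⟩
      obtain ⟨u', hu', hxu', hu'Y⟩ := hY _ hb
      refine ⟨u', ⟨hxu', hu'Y⟩, (List.prefix_append u [b]).trans hu', fun h => ?_⟩
      have := (h ▸ hu').length_le
      simp at this
    obtain ⟨u₀, -, hu₀⟩ := hY [] hsat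
    obtain ⟨g, hg⟩ := exists_seq_of_forall_exists hS hu₀
    exact ⟨g, fun n => ⟨(hg n).1.1, (hg n).2⟩⟩
  · rintro ⟨g, hg⟩
    refine OrderHom.le_gfp F (a := {v | ∃ i, v <+: g i}) (fun v ⟨i, hvi⟩ => (hF _ v).2 ?_)
      ⟨0, List.nil_prefix⟩
    obtain ⟨b, hb⟩ := List.exists_append_singleton_prefix (hg (i + 1)).2.1 (hg (i + 1)).2.2
    exact ⟨g (i + 1), hvi.trans (hg i).2.1, (hg (i + 1)).1, b, i + 2, hb⟩

end Psi

section Coding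

variable {α : Type} [Encodable α]

def encodeList : List α → List Bool
  | [] => []
  | a :: σ => List.replicate (Encodable.encode a) true ++ false :: encodeList σ

theorem encodeList_append (σ τ : List α) :
    encodeList (σ ++ τ) = encodeList σ ++ encodeList τ := by
  induction σ with
  | nil => rfl
  | cons a σ ih => simp [encodeList, ih]

theorem replicate_true_append_false_prefix {m n : ℕ} {l l' : List Bool}
    (h : List.replicate m true ++ false :: l <+: List.replicate n true ++ false :: l') :
    m = n ∧ l <+: l' := by
  induction m generalizing n with
  | zero => cases n <;> simp_all [List.replicate_succ]
  | succ m ih =>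
    cases n with
    | zero => simp [List.replicate_succ] at h
    | succ n => simpa [List.replicate_succ] using ih (by simpa [List.replicate_succ] using h)

theorem prefix_of_encodeList_prefix {σ τ : List α} (h : encodeList σ <+: encodeList τ) :
    σ <+: τ := by
  induction σ generalizing τ with
  | nil => exact List.nil_prefix
  | cons a σ ih =>
    cases τ with
    | nil => simp [encodeList] at h
    | cons b τ =>
      obtain ⟨hab, hστ⟩ := replicate_true_append_false_prefix h
      rw [Encodable.encode_injective hab]
      exact List.cons_prefix_cons.2 ⟨rfl, ih hστ⟩

noncomputable def chainLabelling (r : α → α → Prop) (v : List Bool) : Bool := by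
  classical
  exact decide (∃ σ : List α, σ ≠ [] ∧ σ.IsChain (flip r) ∧ encodeList σ = v)

theorem chainLabelling_eq_true {r : α → α → Prop} {v : List Bool} :
    chainLabelling r v = true ↔ ∃ σ : List α, σ ≠ [] ∧ σ.IsChain (flip r) ∧ encodeList σ = v := by
  simp [chainLabelling]

theorem not_hasBChain_chainLabelling {r : α → α → Prop} (hr : WellFounded r) :
    ¬HasBChain (chainLabelling r) := by
  rintro ⟨g, hg⟩
  choose σ hσ hchain hσg using fun n => chainLabelling_eq_true.1 (hg n).1
  have hpre : ∀ n, σ n <+: σ (n + 1) := fun n =>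
    prefix_of_encodeList_prefix (by simpa only [hσg] using (hg n).2.1)
  have hlen : ∀ n, n < (σ n).length := by
    intro n
    induction n with
    | zero => exact List.length_pos_iff.2 (hσ 0)
    | succ n ih =>
      refine (Nat.succ_le_of_lt ih).trans_lt ((hpre n).length_le.lt_of_ne fun h => (hg n).2.2 ?_)
      rw [← hσg, ← hσg, (hpre n).eq_of_length h]
  refine (wellFounded_iff_isEmpty_descending_chain.1 hr).false
    ⟨fun n => (σ n)[n]'(hlen n), fun n => ?_⟩
  have := List.isChain_iff_getElem.1 (hchain (n + 1)) n (hlen (n + 1))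
  rwa [← (hpre n).getElem (hlen n)] at this

end Coding

section Forcing

def IsInitSeg (b : List ℕ) (y : ℕ → ℕ) : Prop := ∀ i (hi : i < b.length), b[i] = y i

theorem IsInitSeg.prefix {b b' : List ℕ} {y : ℕ → ℕ} (hb : IsInitSeg b y) (hb' : IsInitSeg b' y)
    (hlen : b.length ≤ b'.length) : b <+: b' :=
  List.prefix_iff_getElem.2 ⟨hlen, fun i hi => (hb i hi).trans (hb' i (hi.trans_le hlen)).symm⟩

theorem exists_isInitSeg_of_prefix_chain (b : ℕ → List ℕ) (hpre : ∀ n, b n <+: b (n + 1))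
    (hlen : ∀ n, (b n).length < (b (n + 1)).length) : ∃ y, ∀ n, IsInitSeg (b n) y := by
  have hmono : ∀ m n, m ≤ n → b m <+: b n := Nat.rel_of_forall_rel_succ_of_le (· <+: ·) hpre
  have hgrow : ∀ n, n < (b (n + 1)).length := fun n => by
    induction n with
    | zero => exact (Nat.zero_le _).trans_lt (hlen 0)
    | succ n ih => exact (Nat.succ_le_of_lt ih).trans_lt (hlen (n + 1))
  refine ⟨fun i => (b (i + 1))[i]'(hgrow i), fun n i hi => ?_⟩
  rcases le_total n (i + 1) with h | h
  · exact (hmono _ _ h).getElem hi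
  · exact ((hmono _ _ h).getElem (hgrow i)).symm

variable (f : (ℕ → ℕ) → List Bool → Bool)

def Forces (b : List ℕ) (v : List Bool) : Prop := ∀ y, IsInitSeg b y → f y v = true

variable {f} in
theorem exists_forces (hf : Continuous f) {y : ℕ → ℕ}
    {v : List Bool} (h : f y v = true) (n : ℕ) :
    ∃ b, IsInitSeg b y ∧ n ≤ b.length ∧ Forces f b v := by
  have hU : {z | f z v = true} ∈ nhds y :=
    ((isOpen_discrete {true}).preimage ((continuous_apply v).comp hf)).mem_nhds h
  obtain ⟨_, ⟨x, k, rfl⟩, hyx, hsub⟩ :=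
    (PiNat.isTopologicalBasis_cylinders fun _ => ℕ).mem_nhds_iff.1 hU
  refine ⟨List.ofFn fun i : Fin (max n k) => y i, fun i hi => by simp, by simp, fun z hz => ?_⟩
  refine hsub (PiNat.mem_cylinder_iff_eq.1 hyx ▸ PiNat.mem_cylinder_iff.2 fun i hi => ?_)
  have := hz i (by simp; omega)
  rw [List.getElem_ofFn] at this
  exact this.symm

def ForcingStep (p' p : List ℕ × List Bool) : Prop :=
  p.1 <+: p'.1 ∧ p.1.length < p'.1.length ∧ p.2 <+: p'.2 ∧ p.2 ≠ p'.2 ∧ Forces f p'.1 p'.2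

theorem wellFounded_forcingStep (hf : ∀ y, ¬HasBChain (f y)) : WellFounded (ForcingStep f) := by
  refine wellFounded_iff_isEmpty_descending_chain.2 ⟨fun ⟨p, hp⟩ => ?_⟩
  obtain ⟨y, hy⟩ := exists_isInitSeg_of_prefix_chain (fun n => (p n).1) (fun n => (hp n).1)
    fun n => (hp n).2.1
  exact hf y ⟨fun n => (p (n + 1)).2, fun n =>
    ⟨(hp n).2.2.2.2 y (hy (n + 1)), (hp (n + 1)).2.2.1, (hp (n + 1)).2.2.2.1⟩⟩

end Forcing

section Boundedness

open IsWellFounded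

variable {f : (ℕ → ℕ) → List Bool → Bool} {α : Type} [Encodable α] {r : α → α → Prop}
  [IsWellFounded α r]

theorem rank_le_rank_forcingStep [IsWellFounded _ (ForcingStep f)] (hf : Continuous f)
    {y : ℕ → ℕ} (hy : f y = chainLabelling r) (a : α) (σ : List α)
    (hσ : (σ ++ [a]).IsChain (flip r)) (b : List ℕ) (hb : IsInitSeg b y)
    (hforce : Forces f b (encodeList (σ ++ [a]))) :
    rank r a ≤ rank (ForcingStep f) (b, encodeList (σ ++ [a])) := by
  induction a using IsWellFounded.induction r generalizing σ b with
  | _ a ih =>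
    refine rank_le_of_forall_rank_lt fun a' ha' => ?_
    have hσ' : (σ ++ [a] ++ [a']).IsChain (flip r) :=
      hσ.append (List.isChain_singleton a') (by simp [flip, ha'])
    have hB : f y (encodeList (σ ++ [a] ++ [a'])) = true :=
      hy ▸ chainLabelling_eq_true.2 ⟨_, by simp, hσ', rfl⟩
    obtain ⟨b', hb', hlen, hforce'⟩ := exists_forces hf hB (b.length + 1)
    refine (ih a' ha' _ hσ' b' hb' hforce').trans_lt (rank_lt_of_rel
      ⟨hb.prefix hb' (Nat.le_of_succ_le hlen), hlen, ?_, fun h => ?_, hforce'⟩)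
    · rw [encodeList_append _ [a']]
      exact List.prefix_append _ _
    · have := congrArg List.length h
      simp [encodeList_append, encodeList] at this

theorem not_analyticSet_setOf_not_hasBChain :
    ¬AnalyticSet {x : List Bool → Bool | ¬HasBChain x} := by
  intro h
  rw [AnalyticSet_def] at h
  rcases h with h | ⟨f, hf, hrange⟩
  · exact h.subset (not_hasBChain_chainLabelling (emptyWf (α := Unit)).wf)
  have hS : ∀ y, ¬HasBChain (f y) := fun y => hrange.subset ⟨y, rfl⟩
  have : IsWellFounded _ (ForcingStep f) := ⟨wellFounded_forcingStep f hS⟩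
  obtain ⟨y, hy⟩ : chainLabelling (Option.RelTop (ForcingStep f)) ∈ Set.range f :=
    hrange ▸ not_hasBChain_chainLabelling IsWellFounded.wf
  have hB : f y (encodeList [none]) = true :=
    hy ▸ chainLabelling_eq_true.2 ⟨[none], by simp, by simp, rfl⟩
  obtain ⟨b, hb, -, hforce⟩ := exists_forces hf hB 0
  have hle := (rank_le_rank_forcingStep hf hy none [] (by simp) b hb hforce).trans
    (rank_le_rank_of_map (s := Option.RelTop (ForcingStep f)) some (fun _ _ h => h) _)
  exact (hle.trans_lt
    (rank_lt_of_rel (r := Option.RelTop (ForcingStep f)) (b := none) trivial)).false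

end Boundedness

/-- With a single action and distinct propositional variables
`A = prop 0` and `B = prop 1`, the formula `νY.μX.((A ∧ ⟨a⟩X) ∨ (B ∧ ⟨a⟩Y))` is
not equivalent to any `Σμ2` formula. -/
theorem example_formula_not_sigma2 :
    ¬ SemSigma2 (Formula.nu 0 (.mu 1
      (.or (.and (.prop 0) (.dia () (.var 1)))
           (.and (.prop 1) (.dia () (.var 0)))))) := by
  rintro ⟨Φ, ⟨Ω, hPA, hΩ⟩, hequiv⟩
  have hΦ : CoanalyticSet {x | Sat (binTree x) Φ} :=
    semCoanalytic_of_sigma2 hPA hΩ continuous_id (ρ := fun _ _ => ∅)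
      (fun _ _ => isOpen_empty.coanalyticSet) []
  have hset : {x | ¬HasBChain x} = {x | Sat (binTree x) Φ}ᶜ :=
    Set.ext fun x => not_congr (sat_psi_iff_hasBChain.symm.trans (hequiv (binTree x)))
  exact not_analyticSet_setOf_not_hasBChain (hset ▸ hΦ)

end MuCalc
end

section
/- With a single action a and distinct propositional variables A and B, the formula νY.μX.((A ∧ [a]X) ∨ (B ∧ ⟨a⟩Y)) of the modal mu-calculus is equivalent to the alternation-free formula νY.(((A ∧ [a]Y) ∨ (B ∧ ⟨a⟩Y)) ∧ μX.((A ∧ [a]X) ∨ B)); in particular it is equivalent to a formula in Σμ2. -/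
namespace MuCalc

/-! ### Auxiliary Knaster–Tarski machinery on `Set` -/

section KT
variable {σ : Type}

/-- Least prefixpoint, matching the `sem` clause for `μ`. -/
def lfpS (f : Set σ → Set σ) : Set σ := ⋂₀ {T | f T ⊆ T}

/-- Greatest postfixpoint, matching the `sem` clause for `ν`. -/
def gfpS (f : Set σ → Set σ) : Set σ := ⋃₀ {T | T ⊆ f T}

lemma lfpS_le {f : Set σ → Set σ} {T : Set σ} (h : f T ⊆ T) : lfpS f ⊆ T :=
  Set.sInter_subset_of_mem h

lemma le_gfpS {f : Set σ → Set σ} {T : Set σ} (h : T ⊆ f T) : T ⊆ gfpS f :=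
  Set.subset_sUnion_of_mem h

lemma lfpS_pre {f : Set σ → Set σ} (mono : ∀ ⦃S T : Set σ⦄, S ⊆ T → f S ⊆ f T) :
    f (lfpS f) ⊆ lfpS f := fun s hs => fun T hT => hT (mono (lfpS_le hT) hs)

lemma lfpS_fix {f : Set σ → Set σ} (mono : ∀ ⦃S T : Set σ⦄, S ⊆ T → f S ⊆ f T) :
    f (lfpS f) = lfpS f :=
  subset_antisymm (lfpS_pre mono) (lfpS_le (mono (lfpS_pre mono)))

lemma gfpS_post {f : Set σ → Set σ} (mono : ∀ ⦃S T : Set σ⦄, S ⊆ T → f S ⊆ f T) :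
    gfpS f ⊆ f (gfpS f) := fun s ⟨T, hT, hs⟩ => mono (le_gfpS hT) (hT hs)

lemma gfpS_fix {f : Set σ → Set σ} (mono : ∀ ⦃S T : Set σ⦄, S ⊆ T → f S ⊆ f T) :
    f (gfpS f) = gfpS f :=
  subset_antisymm (le_gfpS (mono (gfpS_post mono))) (gfpS_post mono)

end KT

/-! ### The semantic operators for the two example formulas -/

section ExampleSem
variable (M : LTS Unit)

/-- `Pa` : states where `A = prop 0` holds. -/
def PaS : Set M.State := {s | M.val s 0}
/-- `Pb` : states where `B = prop 1` holds. -/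
def PbS : Set M.State := {s | M.val s 1}
/-- `[a]`. -/
def boxS (S : Set M.State) : Set M.State := {s | ∀ t, M.trans s () t → t ∈ S}
/-- `⟨a⟩`. -/
def diaS (S : Set M.State) : Set M.State := {s | ∃ t, M.trans s () t ∧ t ∈ S}

lemma boxS_mono {S T : Set M.State} (h : S ⊆ T) : boxS M S ⊆ boxS M T :=
  fun _ hs t ht => h (hs t ht)

lemma diaS_mono {S T : Set M.State} (h : S ⊆ T) : diaS M S ⊆ diaS M T :=
  fun _ ⟨t, ht, hts⟩ => ⟨t, ht, h hts⟩

/-- The inner operator `X ↦ (A ∧ [a]X) ∨ (B ∧ ⟨a⟩Y)`. -/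
def op1 (Y X : Set M.State) : Set M.State :=
  (PaS M ∩ boxS M X) ∪ (PbS M ∩ diaS M Y)

/-- `F Y = μX.((A ∧ [a]X) ∨ (B ∧ ⟨a⟩Y))`. -/
def Fop (Y : Set M.State) : Set M.State := lfpS (op1 M Y)

/-- `W = μX.((A ∧ [a]X) ∨ B)`. -/
def Wset : Set M.State := lfpS (fun X => (PaS M ∩ boxS M X) ∪ PbS M)

/-- The operator of the alternation-free formula. -/
def Gop (Y : Set M.State) : Set M.State :=
  ((PaS M ∩ boxS M Y) ∪ (PbS M ∩ diaS M Y)) ∩ Wset M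

lemma op1_monoX (Y : Set M.State) :
    ∀ ⦃S T : Set M.State⦄, S ⊆ T → op1 M Y S ⊆ op1 M Y T :=
  fun _ _ h => Set.union_subset_union_left _ (Set.inter_subset_inter_right _ (boxS_mono M h))

lemma opW_mono :
    ∀ ⦃S T : Set M.State⦄, S ⊆ T →
      (PaS M ∩ boxS M S) ∪ PbS M ⊆ (PaS M ∩ boxS M T) ∪ PbS M :=
  fun _ _ h => Set.union_subset_union_left _ (Set.inter_subset_inter_right _ (boxS_mono M h))

lemma Fop_mono : ∀ ⦃S T : Set M.State⦄, S ⊆ T → Fop M S ⊆ Fop M T := by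
  intro S T h
  refine lfpS_le ?_
  refine (Set.union_subset_union_right _
      (Set.inter_subset_inter_right _ (diaS_mono M h))).trans ?_
  exact lfpS_pre (op1_monoX M T)

lemma Gop_mono : ∀ ⦃S T : Set M.State⦄, S ⊆ T → Gop M S ⊆ Gop M T := by
  intro S T h
  refine Set.inter_subset_inter_left _ ?_
  exact Set.union_subset_union
    (Set.inter_subset_inter_right _ (boxS_mono M h))
    (Set.inter_subset_inter_right _ (diaS_mono M h))

/-- `W` is a prefixpoint of its operator. -/
lemma Wset_pre : (PaS M ∩ boxS M (Wset M)) ∪ PbS M ⊆ Wset M :=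
  lfpS_pre (opW_mono M)

/-- `F Y ⊆ W` for every `Y`. -/
lemma Fop_subset_W (Y : Set M.State) : Fop M Y ⊆ Wset M := by
  refine lfpS_le ?_
  refine Set.Subset.trans ?_ (Wset_pre M)
  exact Set.union_subset_union_right _ Set.inter_subset_left

/-- `F Y` is a fixpoint of `op1 Y`. -/
lemma Fop_fix (Y : Set M.State) : op1 M Y (Fop M Y) = Fop M Y :=
  lfpS_fix (op1_monoX M Y)

/-- The key semantic equality: `νY.F(Y) = νY.G(Y)`. -/
lemma gfpF_eq_gfpG : gfpS (Fop M) = gfpS (Gop M) := by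
  set V1 := gfpS (Fop M) with hV1def
  set V2 := gfpS (Gop M) with hV2def
  have hV1F : Fop M V1 = V1 := gfpS_fix (Fop_mono M)
  have hV2G : Gop M V2 = V2 := gfpS_fix (Gop_mono M)
  -- V1 is a fixpoint of its own one-step unfolding
  have hV1unf : V1 = op1 M V1 V1 := by
    conv_lhs => rw [← hV1F]
    rw [show Fop M V1 = op1 M V1 (Fop M V1) from (Fop_fix M V1).symm, hV1F]
  apply subset_antisymm
  · -- V1 ⊆ V2 : V1 is a postfixpoint of G
    apply le_gfpS
    intro s hs
    constructor
    · exact hV1unf.subset hs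
    · exact Fop_subset_W M V1 (hV1F.symm.subset hs)
  · -- V2 ⊆ V1 : show V2 ⊆ F V2, then coinduction
    apply le_gfpS
    -- μ-induction on W with the predicate S = {s | s ∈ V2 → s ∈ F V2}
    have hWind : Wset M ⊆ {s | s ∈ V2 → s ∈ Fop M V2} := by
      apply lfpS_le
      intro s hs hsV2
      have hsG : s ∈ Gop M V2 := hV2G.symm.subset hsV2
      have hcase : s ∈ (PaS M ∩ boxS M V2) ∪ (PbS M ∩ diaS M V2) := hsG.1
      have hFfix : op1 M V2 (Fop M V2) = Fop M V2 := Fop_fix M V2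
      rcases hcase with hab | hbd
      · -- s ∈ Pa ∩ □V2
        rcases hs with hS | hb
        · -- s ∈ Pa ∩ □S : all successors are in V2 and in S, hence in F V2
          refine hFfix.subset (Or.inl ⟨hS.1, fun t ht => ?_⟩)
          exact hS.2 t ht (hab.2 t ht)
        · -- s ∈ Pb : case on existence of a successor
          by_cases hex : ∃ t, M.trans s () t
          · rcases hex with ⟨t, ht⟩
            exact hFfix.subset (Or.inr ⟨hb, t, ht, hab.2 t ht⟩)
          · exact hFfix.subset (Or.inl ⟨hab.1, fun t ht => absurd ⟨t, ht⟩ hex⟩)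
      · -- s ∈ Pb ∩ ◇V2
        exact hFfix.subset (Or.inr hbd)
    intro s hs
    exact hWind (hV2G.symm.subset hs).2 hs

/-- The semantics of the first formula is `νY.F(Y)`. -/
lemma sem_phi1 :
    sem M (Formula.nu 0 (.mu 1
        (.or (.and (.prop 0) (.box () (.var 1)))
             (.and (.prop 1) (.dia () (.var 0)))))) (fun _ => ∅)
      = gfpS (Fop M) := by
  simp only [sem, gfpS, Fop, lfpS, op1, PaS, PbS, boxS, diaS]
  simp [Function.update]

/-- The semantics of the second formula is `νY.G(Y)`. -/
lemma sem_phi2 :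
    sem M (Formula.nu 0 (.and
        (.or (.and (.prop 0) (.box () (.var 0)))
             (.and (.prop 1) (.dia () (.var 0))))
        (.mu 1 (.or (.and (.prop 0) (.box () (.var 1))) (.prop 1))))) (fun _ => ∅)
      = gfpS (Gop M) := by
  simp only [sem, gfpS, Gop, Wset, lfpS, PaS, PbS, boxS, diaS]
  simp [Function.update]

end ExampleSem

/-- With a single action and distinct propositional variables
`A = prop 0` and `B = prop 1`, the formula `νY.μX.((A ∧ [a]X) ∨ (B ∧ ⟨a⟩Y))` is
equivalent to the alternation-free formula
`νY.(((A ∧ [a]Y) ∨ (B ∧ ⟨a⟩Y)) ∧ μX.((A ∧ [a]X) ∨ B))`; in particular it is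
equivalent to a formula in `Σμ2`. -/
theorem example_formula_semantically_sigma2 :
    FEquiv
      (Formula.nu 0 (.mu 1
        (.or (.and (.prop 0) (.box () (.var 1)))
             (.and (.prop 1) (.dia () (.var 0))))))
      (Formula.nu 0 (.and
        (.or (.and (.prop 0) (.box () (.var 0)))
             (.and (.prop 1) (.dia () (.var 0))))
        (.mu 1 (.or (.and (.prop 0) (.box () (.var 1))) (.prop 1))))) ∧
    ∃ Φ : Formula Unit, IsSigma2 Φ ∧
      FEquiv (Formula.nu 0 (.mu 1
        (.or (.and (.prop 0) (.box () (.var 1)))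
             (.and (.prop 1) (.dia () (.var 0)))))) Φ := by
  have hequiv : FEquiv
      (Formula.nu 0 (.mu 1
        (.or (.and (.prop 0) (.box () (.var 1)))
             (.and (.prop 1) (.dia () (.var 0))))))
      (Formula.nu 0 (.and
        (.or (.and (.prop 0) (.box () (.var 0)))
             (.and (.prop 1) (.dia () (.var 0))))
        (.mu 1 (.or (.and (.prop 0) (.box () (.var 1))) (.prop 1))))) := by
    intro M
    unfold Sat
    rw [sem_phi1, sem_phi2, gfpF_eq_gfpG]
  refine ⟨hequiv, _, ?_, hequiv⟩
  refine ⟨fun X => if X = 0 then 0 else 1, ?_, ?_⟩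
  · refine ⟨?_, ?_, ⟨⟨trivial, trivial⟩, ⟨trivial, trivial⟩⟩, ?_, ?_, ⟨⟨trivial, trivial⟩, trivial⟩⟩
    · simp
    · intro Y _; simp
    · simp [Nat.odd_iff]
    · intro Y hY
      simp only [freeVars, Set.mem_union, Set.mem_singleton_iff, Set.mem_empty_iff_false,
        or_false, false_or] at hY
      subst hY; simp
  · intro X hX
    simp only [fixVars, Set.mem_insert_iff, Set.mem_union, Set.mem_empty_iff_false,
      or_false, false_or] at hX
    rcases hX with h | h <;> subst h <;> simp

end MuCalc
end
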